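/- arXiv:1907.01080 — 2 statements merged into one kernel-verified Lean document; each statement's English description precedes it below -/
import Mathlib

section
/- Let K = ZMod 2 and n = 2. For every subset S ⊆ (Fin 2 → K) with exactly three elements, the vanishing ideal I(S) has exactly one reduced Gröbner basis; that is, its reduced Gröbner basis is the same for every monomial order. -/
open MvPolynomial

/-- The leading monomial of `f` with respect to the monomial order `m`:
the `m`-largest monomial in the support of `f` (equal to `0` if `f = 0`). -/
noncomputable def leadMon {n : ℕ} {K : Type*} [CommSemiring K]
    (m : MonomialOrder (Fin n)) (f : MvPolynomial (Fin n) K) : Fin n →₀ ℕ :=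
  m.toSyn.symm (f.support.sup fun d => m.toSyn d)

/-- The leading coefficient of `f` with respect to the monomial order `m`. -/
noncomputable def leadCoeff {n : ℕ} {K : Type*} [CommSemiring K]
    (m : MonomialOrder (Fin n)) (f : MvPolynomial (Fin n) K) : K :=
  f.coeff (leadMon m f)

/-- `G` is a Gröbner basis of the ideal `I` with respect to the monomial order `m`:
`G` is a finite set of nonzero elements of `I` such that the leading monomial of every
nonzero element of `I` is divisible by the leading monomial of some `g ∈ G`.
(Divisibility of monomials is the pointwise order `≤` on exponent vectors.) -/
def IsGroebnerBasis {n : ℕ} {K : Type*} [Field K] (m : MonomialOrder (Fin n))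
    (I : Ideal (MvPolynomial (Fin n) K)) (G : Finset (MvPolynomial (Fin n) K)) : Prop :=
  (∀ g ∈ G, g ≠ 0) ∧ ((G : Set (MvPolynomial (Fin n) K)) ⊆ I) ∧
    ∀ f ∈ I, f ≠ 0 → ∃ g ∈ G, leadMon m g ≤ leadMon m f

/-- `G` is the reduced Gröbner basis of `I` with respect to `m`: it is a Gröbner basis,
every element has leading coefficient `1`, and no monomial in the support of any `g ∈ G`
is divisible by the leading monomial of another element of `G`. -/
def IsReducedGroebnerBasis {n : ℕ} {K : Type*} [Field K] (m : MonomialOrder (Fin n))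
    (I : Ideal (MvPolynomial (Fin n) K)) (G : Finset (MvPolynomial (Fin n) K)) : Prop :=
  IsGroebnerBasis m I G ∧ (∀ g ∈ G, leadCoeff m g = 1) ∧
    ∀ g ∈ G, ∀ g' ∈ G, g' ≠ g → ∀ d ∈ g.support, ¬ leadMon m g' ≤ d

/-- The number of distinct reduced Gröbner bases of `I`, i.e. the cardinality of the set
of all `G` that are the reduced Gröbner basis of `I` with respect to some monomial order. -/
noncomputable def numReducedGB {n : ℕ} {K : Type*} [Field K]
    (I : Ideal (MvPolynomial (Fin n) K)) : ℕ :=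
  Set.ncard {G : Finset (MvPolynomial (Fin n) K) |
    ∃ m : MonomialOrder.{0,0} (Fin n), IsReducedGroebnerBasis m I G}


section Generic

variable {n : ℕ} {K : Type*} [CommSemiring K] (m : MonomialOrder (Fin n))
  (f : MvPolynomial (Fin n) K)

lemma leadMon_mem_support (hf : f ≠ 0) : leadMon m f ∈ f.support := by
  obtain ⟨b, hb, hsup⟩ := Finset.exists_mem_eq_sup f.support
    (MvPolynomial.support_nonempty.mpr hf) (fun d => m.toSyn d)
  simpa [leadMon, hsup] using hb

lemma le_leadMon {d : Fin n →₀ ℕ} (hd : d ∈ f.support) :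
    m.toSyn d ≤ m.toSyn (leadMon m f) := by
  simpa [leadMon] using Finset.le_sup (f := fun d => m.toSyn d) hd

lemma leadMon_eq_of {d : Fin n →₀ ℕ} (hd : d ∈ f.support)
    (h : ∀ e ∈ f.support, m.toSyn e ≤ m.toSyn d) : leadMon m f = d := by
  apply m.toSyn.injective
  apply le_antisymm
  · simpa [leadMon] using Finset.sup_le h
  · exact le_leadMon m f hd

lemma leadCoeff_ne_zero (hf : f ≠ 0) : leadCoeff m f ≠ 0 := by
  have := leadMon_mem_support m f hf
  simpa [leadCoeff, MvPolynomial.mem_support_iff] using this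

end Generic

namespace GBAux

noncomputable abbrev R2 : Type := MvPolynomial (Fin 2) (ZMod 2)

noncomputable def mX : Fin 2 →₀ ℕ := Finsupp.single 0 1
noncomputable def mY : Fin 2 →₀ ℕ := Finsupp.single 1 1
noncomputable def mE2 : Fin 2 →₀ ℕ := Finsupp.single 0 2
noncomputable def mF2 : Fin 2 →₀ ℕ := Finsupp.single 1 2
noncomputable def mXY : Fin 2 →₀ ℕ := Finsupp.single 0 1 + Finsupp.single 1 1

@[simp] lemma mX_apply (i : Fin 2) : mX i = if i = 0 then 1 else 0 := by
  simp [mX, Finsupp.single_apply, eq_comm]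
@[simp] lemma mY_apply (i : Fin 2) : mY i = if i = 1 then 1 else 0 := by
  simp [mY, Finsupp.single_apply, eq_comm]
@[simp] lemma mE2_apply (i : Fin 2) : mE2 i = if i = 0 then 2 else 0 := by
  simp [mE2, Finsupp.single_apply, eq_comm]
@[simp] lemma mF2_apply (i : Fin 2) : mF2 i = if i = 1 then 2 else 0 := by
  simp [mF2, Finsupp.single_apply, eq_comm]
@[simp] lemma mXY_apply (i : Fin 2) : mXY i = 1 := by
  fin_cases i <;> simp [mXY, Finsupp.single_apply]

lemma finsupp2_ext {a b : Fin 2 →₀ ℕ} (h0 : a 0 = b 0) (h1 : a 1 = b 1) : a = b := by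
  ext i; fin_cases i <;> assumption

lemma finsupp2_le {a b : Fin 2 →₀ ℕ} : a ≤ b ↔ a 0 ≤ b 0 ∧ a 1 ≤ b 1 := by
  rw [Finsupp.le_def]
  constructor
  · exact fun h => ⟨h 0, h 1⟩
  · rintro ⟨h0, h1⟩ i; fin_cases i <;> assumption

noncomputable def gX : R2 := X 0 ^ 2 + X 0
noncomputable def gY : R2 := X 1 ^ 2 + X 1
noncomputable def gQ (p : Fin 2 → ZMod 2) : R2 :=
  X 0 * X 1 + C (p 1 + 1) * X 0 + C (p 0 + 1) * X 1 + C ((p 0 + 1) * (p 1 + 1))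

lemma X0_eq : (X 0 : R2) = monomial mX 1 := by rw [mX, ← X_pow_eq_monomial, pow_one]
lemma X1_eq : (X 1 : R2) = monomial mY 1 := by rw [mY, ← X_pow_eq_monomial, pow_one]

lemma gX_eq : gX = monomial mE2 1 + monomial mX 1 := by
  rw [gX, X_pow_eq_monomial, X0_eq, mE2]
lemma gY_eq : gY = monomial mF2 1 + monomial mY 1 := by
  rw [gY, X_pow_eq_monomial, X1_eq, mF2]
lemma gQ_eq (p : Fin 2 → ZMod 2) : gQ p = monomial mXY 1 + monomial mX (p 1 + 1)
    + monomial mY (p 0 + 1) + monomial 0 ((p 0 + 1) * (p 1 + 1)) := by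
  have h : mXY = mX + mY := rfl
  rw [gQ, X0_eq, X1_eq, monomial_mul, C_mul_monomial, C_mul_monomial, C_apply, h]
  ring_nf

lemma coeff_gX (d : Fin 2 →₀ ℕ) :
    coeff d gX = (if mE2 = d then 1 else 0) + (if mX = d then 1 else 0) := by
  rw [gX_eq]; simp [coeff_add, coeff_monomial]

lemma support_gX : gX.support ⊆ {mE2, mX} := by
  intro d hd
  rw [MvPolynomial.mem_support_iff, coeff_gX] at hd
  by_contra h
  simp only [Finset.mem_insert, Finset.mem_singleton] at h
  push_neg at h
  simp [Ne.symm h.1, Ne.symm h.2] at hd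

end GBAux

namespace GBAux
open MvPolynomial

lemma coeff_gY (d : Fin 2 →₀ ℕ) :
    coeff d gY = (if mF2 = d then 1 else 0) + (if mY = d then 1 else 0) := by
  rw [gY_eq]; simp [coeff_add, coeff_monomial]

lemma support_gY : gY.support ⊆ {mF2, mY} := by
  intro d hd
  rw [MvPolynomial.mem_support_iff, coeff_gY] at hd
  by_contra h
  simp only [Finset.mem_insert, Finset.mem_singleton] at h
  push_neg at h
  simp [Ne.symm h.1, Ne.symm h.2] at hd

lemma coeff_gQ (p : Fin 2 → ZMod 2) (d : Fin 2 →₀ ℕ) :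
    coeff d (gQ p) = (if mXY = d then 1 else 0) + (if mX = d then p 1 + 1 else 0)
      + (if mY = d then p 0 + 1 else 0) + (if 0 = d then (p 0 + 1) * (p 1 + 1) else 0) := by
  rw [gQ_eq]; simp only [coeff_add, coeff_monomial]

lemma support_gQ (p : Fin 2 → ZMod 2) : (gQ p).support ⊆ {mXY, mX, mY, 0} := by
  intro d hd
  rw [MvPolynomial.mem_support_iff, coeff_gQ] at hd
  by_contra h
  simp only [Finset.mem_insert, Finset.mem_singleton] at h
  push_neg at h
  obtain ⟨h1, h2, h3, h4⟩ := h
  simp [Ne.symm h1, Ne.symm h2, Ne.symm h3, Ne.symm h4] at hd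

-- distinctness of the monomials
lemma mE2_ne_mX : mE2 ≠ mX := fun h => by have := DFunLike.congr_fun h 0; simp at this
lemma mF2_ne_mY : mF2 ≠ mY := fun h => by have := DFunLike.congr_fun h 1; simp at this
lemma mXY_ne_mX : mXY ≠ mX := fun h => by have := DFunLike.congr_fun h 1; simp at this
lemma mXY_ne_mY : mXY ≠ mY := fun h => by have := DFunLike.congr_fun h 0; simp at this
lemma mXY_ne_zero : mXY ≠ 0 := fun h => by have := DFunLike.congr_fun h 0; simp at this

lemma coeff_mE2_gX : coeff mE2 gX = 1 := by
  rw [coeff_gX, if_pos rfl, if_neg (Ne.symm mE2_ne_mX)]; norm_num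
lemma coeff_mF2_gY : coeff mF2 gY = 1 := by
  rw [coeff_gY, if_pos rfl, if_neg (Ne.symm mF2_ne_mY)]; norm_num
lemma coeff_mXY_gQ (p : Fin 2 → ZMod 2) : coeff mXY (gQ p) = 1 := by
  rw [coeff_gQ, if_pos rfl, if_neg (Ne.symm mXY_ne_mX), if_neg (Ne.symm mXY_ne_mY),
    if_neg (fun h => mXY_ne_zero h.symm)]
  norm_num

end GBAux

namespace GBAux
open MvPolynomial

lemma gX_ne_zero : gX ≠ 0 := fun h => by have := coeff_mE2_gX; rw [h] at this; simp at this
lemma gY_ne_zero : gY ≠ 0 := fun h => by have := coeff_mF2_gY; rw [h] at this; simp at this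
lemma gQ_ne_zero (p : Fin 2 → ZMod 2) : gQ p ≠ 0 := fun h => by
  have := coeff_mXY_gQ p; rw [h] at this; simp at this

variable (m : MonomialOrder (Fin 2))

lemma leadMon_gX : leadMon m gX = mE2 := by
  apply leadMon_eq_of
  · rw [MvPolynomial.mem_support_iff, coeff_mE2_gX]; norm_num
  · intro e he
    rcases Finset.mem_insert.mp (support_gX he) with h | h
    · rw [h]
    · rw [Finset.mem_singleton.mp h]
      exact m.toSyn_monotone (by rw [finsupp2_le]; simp)

lemma leadMon_gY : leadMon m gY = mF2 := by
  apply leadMon_eq_of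
  · rw [MvPolynomial.mem_support_iff, coeff_mF2_gY]; norm_num
  · intro e he
    rcases Finset.mem_insert.mp (support_gY he) with h | h
    · rw [h]
    · rw [Finset.mem_singleton.mp h]
      exact m.toSyn_monotone (by rw [finsupp2_le]; simp)

lemma leadMon_gQ (p : Fin 2 → ZMod 2) : leadMon m (gQ p) = mXY := by
  apply leadMon_eq_of
  · rw [MvPolynomial.mem_support_iff, coeff_mXY_gQ]; norm_num
  · intro e he
    have h := support_gQ p he
    simp only [Finset.mem_insert, Finset.mem_singleton] at h
    rcases h with h | h | h | h <;> rw [h] <;>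
      exact m.toSyn_monotone (by rw [finsupp2_le]; simp)

lemma leadCoeff_gX : leadCoeff m gX = 1 := by rw [leadCoeff, leadMon_gX, coeff_mE2_gX]
lemma leadCoeff_gY : leadCoeff m gY = 1 := by rw [leadCoeff, leadMon_gY, coeff_mF2_gY]
lemma leadCoeff_gQ (p : Fin 2 → ZMod 2) : leadCoeff m (gQ p) = 1 := by
  rw [leadCoeff, leadMon_gQ, coeff_mXY_gQ]

end GBAux

namespace GBAux
open MvPolynomial

lemma mE2_le (d : Fin 2 →₀ ℕ) : mE2 ≤ d ↔ 2 ≤ d 0 := by rw [finsupp2_le]; simp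
lemma mF2_le (d : Fin 2 →₀ ℕ) : mF2 ≤ d ↔ 2 ≤ d 1 := by rw [finsupp2_le]; simp
lemma mXY_le (d : Fin 2 →₀ ℕ) : mXY ≤ d ↔ 1 ≤ d 0 ∧ 1 ≤ d 1 := by rw [finsupp2_le]; simp
lemma mX_le (d : Fin 2 →₀ ℕ) : mX ≤ d ↔ 1 ≤ d 0 := by rw [finsupp2_le]; simp
lemma mY_le (d : Fin 2 →₀ ℕ) : mY ≤ d ↔ 1 ≤ d 1 := by rw [finsupp2_le]; simp

lemma lead_not_small (m : MonomialOrder (Fin 2)) (p : Fin 2 → ZMod 2) (f : R2) (hf : f ≠ 0)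
    (hvan : ∀ s : Fin 2 → ZMod 2, s ≠ p → eval s f = 0) :
    mE2 ≤ leadMon m f ∨ mF2 ≤ leadMon m f ∨ mXY ≤ leadMon m f := by
  classical
  have two_z : ∀ x : ZMod 2, x + x = 0 := by decide
  have succ_ne : ∀ x : ZMod 2, x + 1 ≠ x := by decide
  set d := leadMon m f with hdd
  have hd : d ∈ f.support := leadMon_mem_support m f hf
  have hcoeff : coeff d f ≠ 0 := MvPolynomial.mem_support_iff.mp hd
  by_contra hcon
  push_neg at hcon
  obtain ⟨h1, h2, h3⟩ := hcon
  rw [mE2_le] at h1; rw [mF2_le] at h2; rw [mXY_le] at h3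
  -- key fact used in the (1,0) and (0,1) cases
  have key : ∀ e ∈ f.support, e ≠ d → ¬ d ≤ e := by
    intro e he hne hle
    exact hne (m.toSyn.injective (le_antisymm (le_leadMon m f he) (m.toSyn_monotone hle)))
  have hd0 : d 0 = 0 ∨ d 0 = 1 := by omega
  have hd1 : d 1 = 0 ∨ d 1 = 1 := by omega
  have hno : d 0 = 0 ∨ d 1 = 0 := by omega
  -- case distinction
  rcases hd0 with hx0 | hx1
  · rcases hd1 with hy0 | hy1
    · -- d = 0 : f is a nonzero constant
      have hdz : d = 0 := finsupp2_ext (by simpa using hx0) (by simpa using hy0)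
      have hsupp : ∀ e ∈ f.support, e = 0 := by
        intro e he
        apply m.toSyn.injective
        have hle : m.toSyn e ≤ m.toSyn d := le_leadMon m f he
        rw [hdz, map_zero] at hle
        rw [map_zero]
        exact le_antisymm hle (by simpa using (bot_le : (⊥ : m.syn) ≤ m.toSyn e))
      have hs : (fun i : Fin 2 => p i + 1) ≠ p := fun h => succ_ne (p 0) (congrFun h 0)
      have := hvan _ hs
      rw [MvPolynomial.eval_eq'] at this
      rw [Finset.sum_eq_single (0 : Fin 2 →₀ ℕ)
        (fun b hb hb' => absurd (hsupp b hb) hb')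
        (fun h0 => by rw [MvPolynomial.notMem_support_iff.mp h0, zero_mul])] at this
      simp at this
      rw [hdz] at hcoeff
      exact hcoeff this
    · -- d = mY
      have hdy : d = mY := finsupp2_ext (by simp [hx0]) (by simp [hy1])
      have key0 : ∀ e ∈ f.support, e ≠ d → e 1 = 0 := by
        intro e he hne
        by_contra h0
        exact key e he hne (hdy ▸ (mY_le e).mpr (by omega))
      set b := p 0 + 1 with hb
      have hvb : ∀ c : ZMod 2, (![b, c] : Fin 2 → ZMod 2) ≠ p := by
        intro c h
        have := congrFun h 0
        rw [Matrix.cons_val_zero, hb] at this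
        exact succ_ne (p 0) this
      have main : eval ![b, 1] f + eval ![b, 0] f = coeff d f := by
        rw [MvPolynomial.eval_eq', MvPolynomial.eval_eq', ← Finset.sum_add_distrib]
        rw [Finset.sum_eq_single d ?hA ?hB]
        · simp [Fin.prod_univ_two, hx0, hy1]
        case hA =>
          intro e he hne
          have he0 : e 1 = 0 := key0 e he hne
          rw [Fin.prod_univ_two, Fin.prod_univ_two]
          simp only [Matrix.cons_val_zero, Matrix.cons_val_one, Matrix.head_cons, he0,
            pow_zero, mul_one]
          rw [← mul_add, two_z, mul_zero]
        case hB => exact fun h => absurd hd h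
      rw [hvan _ (hvb 1), hvan _ (hvb 0), add_zero] at main
      exact hcoeff main.symm
  · rcases hd1 with hy0 | _
    · -- d = mX
      have hdx : d = mX := finsupp2_ext (by simp [hx1]) (by simp [hy0])
      have key0 : ∀ e ∈ f.support, e ≠ d → e 0 = 0 := by
        intro e he hne
        by_contra h0
        exact key e he hne (hdx ▸ (mX_le e).mpr (by omega))
      set b := p 1 + 1 with hb
      have hvb : ∀ c : ZMod 2, (![c, b] : Fin 2 → ZMod 2) ≠ p := by
        intro c h
        have := congrFun h 1
        rw [Matrix.cons_val_one, Matrix.cons_val_zero, hb] at this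
        exact succ_ne (p 1) this
      have main : eval ![1, b] f + eval ![0, b] f = coeff d f := by
        rw [MvPolynomial.eval_eq', MvPolynomial.eval_eq', ← Finset.sum_add_distrib]
        rw [Finset.sum_eq_single d ?hA ?hB]
        · simp [Fin.prod_univ_two, hx1, hy0]
        case hA =>
          intro e he hne
          have he0 : e 0 = 0 := key0 e he hne
          rw [Fin.prod_univ_two, Fin.prod_univ_two]
          simp only [Matrix.cons_val_zero, Matrix.cons_val_one, Matrix.head_cons, he0,
            pow_zero, one_mul]
          rw [← mul_add, two_z, mul_zero]
        case hB => exact fun h => absurd hd h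
      rw [hvan _ (hvb 1), hvan _ (hvb 0), add_zero] at main
      exact hcoeff main.symm
    · omega

end GBAux

namespace GBAux
open MvPolynomial

lemma mE2_ne_mF2 : mE2 ≠ mF2 := fun h => by have := DFunLike.congr_fun h 0; simp at this
lemma mE2_ne_mXY : mE2 ≠ mXY := fun h => by have := DFunLike.congr_fun h 1; simp at this
lemma mF2_ne_mXY : mF2 ≠ mXY := fun h => by have := DFunLike.congr_fun h 0; simp at this

lemma S_eq (S : Set (Fin 2 → ZMod 2)) (hS : S.ncard = 3) : ∃ p, S = {p}ᶜ := by
  have h4 : Nat.card (Fin 2 → ZMod 2) = 4 := by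
    simp [Nat.card_eq_fintype_card]
  have hcompl : (Sᶜ).ncard = 1 := by
    have := Set.ncard_add_ncard_compl S
    omega
  obtain ⟨p, hp⟩ := Set.ncard_eq_one.mp hcompl
  exact ⟨p, by rw [← compl_compl S, hp]⟩

lemma mem_I (p : Fin 2 → ZMod 2) (f : R2) :
    f ∈ vanishingIdeal (ZMod 2) ({p}ᶜ : Set (Fin 2 → ZMod 2)) ↔ ∀ s, s ≠ p → eval s f = 0 := by
  rw [mem_vanishingIdeal_iff]
  simp

lemma gX_mem (p : Fin 2 → ZMod 2) : gX ∈ vanishingIdeal (ZMod 2) ({p}ᶜ : Set (Fin 2 → ZMod 2)) := by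
  rw [mem_I]
  intro s _
  have h : ∀ z : ZMod 2, z ^ 2 + z = 0 := by decide
  simp only [gX, map_add, map_pow, eval_X]
  exact h (s 0)

lemma gY_mem (p : Fin 2 → ZMod 2) : gY ∈ vanishingIdeal (ZMod 2) ({p}ᶜ : Set (Fin 2 → ZMod 2)) := by
  rw [mem_I]
  intro s _
  have h : ∀ z : ZMod 2, z ^ 2 + z = 0 := by decide
  simp only [gY, map_add, map_pow, eval_X]
  exact h (s 1)

lemma gQ_mem (p : Fin 2 → ZMod 2) : gQ p ∈ vanishingIdeal (ZMod 2) ({p}ᶜ : Set (Fin 2 → ZMod 2)) := by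
  rw [mem_I]
  intro s hs
  have key : ∀ a b c d : ZMod 2, (a ≠ c ∨ b ≠ d) →
      a * b + (d + 1) * a + (c + 1) * b + (c + 1) * (d + 1) = 0 := by decide
  have hdisj : s 0 ≠ p 0 ∨ s 1 ≠ p 1 := by
    by_contra h
    push_neg at h
    exact hs (funext fun i => by fin_cases i <;> [exact h.1; exact h.2])
  simp only [gQ, map_add, map_mul, eval_X, eval_C]
  exact key _ _ _ _ hdisj

/-- The common reduced Groebner basis. -/
noncomputable def B (p : Fin 2 → ZMod 2) : Finset R2 := {gX, gY, gQ p}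

lemma mem_B {p : Fin 2 → ZMod 2} {g : R2} (hg : g ∈ B p) : g = gX ∨ g = gY ∨ g = gQ p := by
  simpa [B] using hg

lemma gX_supp_facts : ∀ d ∈ gX.support, ¬ mF2 ≤ d ∧ ¬ mXY ≤ d := by
  intro d hd
  rcases Finset.mem_insert.mp (support_gX hd) with rfl | h
  · rw [mF2_le, mXY_le]; simp
  · rw [Finset.mem_singleton.mp h, mF2_le, mXY_le]; simp

lemma gY_supp_facts : ∀ d ∈ gY.support, ¬ mE2 ≤ d ∧ ¬ mXY ≤ d := by
  intro d hd
  rcases Finset.mem_insert.mp (support_gY hd) with rfl | h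
  · rw [mE2_le, mXY_le]; simp
  · rw [Finset.mem_singleton.mp h, mE2_le, mXY_le]; simp

lemma gQ_supp_facts (p : Fin 2 → ZMod 2) :
    ∀ d ∈ (gQ p).support, ¬ mE2 ≤ d ∧ ¬ mF2 ≤ d := by
  intro d hd
  have h := support_gQ p hd
  simp only [Finset.mem_insert, Finset.mem_singleton] at h
  rcases h with rfl | rfl | rfl | rfl <;> rw [mE2_le, mF2_le] <;> simp

lemma B_isRGB (m : MonomialOrder (Fin 2)) (p : Fin 2 → ZMod 2) :
    IsReducedGroebnerBasis m (vanishingIdeal (ZMod 2) ({p}ᶜ : Set (Fin 2 → ZMod 2))) (B p) := by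
  refine ⟨⟨?_, ?_, ?_⟩, ?_, ?_⟩
  · intro g hg
    rcases mem_B hg with rfl | rfl | rfl
    exacts [gX_ne_zero, gY_ne_zero, gQ_ne_zero p]
  · intro g hg
    rcases mem_B hg with rfl | rfl | rfl
    exacts [gX_mem p, gY_mem p, gQ_mem p]
  · intro f hf hf0
    rcases lead_not_small m p f hf0 ((mem_I p f).mp hf) with h | h | h
    · exact ⟨gX, by simp [B], by rw [leadMon_gX]; exact h⟩
    · exact ⟨gY, by simp [B], by rw [leadMon_gY]; exact h⟩
    · exact ⟨gQ p, by simp [B], by rw [leadMon_gQ]; exact h⟩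
  · intro g hg
    rcases mem_B hg with rfl | rfl | rfl
    exacts [leadCoeff_gX m, leadCoeff_gY m, leadCoeff_gQ m p]
  · intro g hg g' hg' hne d hd
    rcases mem_B hg with rfl | rfl | rfl <;> rcases mem_B hg' with rfl | rfl | rfl <;>
      first
      | exact absurd rfl hne
      | (rw [leadMon_gX]; exact (gY_supp_facts d hd).1)
      | (rw [leadMon_gX]; exact (gQ_supp_facts p d hd).1)
      | (rw [leadMon_gY]; exact (gX_supp_facts d hd).1)
      | (rw [leadMon_gY]; exact (gQ_supp_facts p d hd).2)
      | (rw [leadMon_gQ]; exact (gX_supp_facts d hd).2)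
      | (rw [leadMon_gQ]; exact (gY_supp_facts d hd).2)

end GBAux

namespace GBAux
open MvPolynomial

lemma RGB_unique (m : MonomialOrder (Fin 2)) (p : Fin 2 → ZMod 2)
    (G : Finset R2)
    (hG : IsReducedGroebnerBasis m (vanishingIdeal (ZMod 2) ({p}ᶜ : Set (Fin 2 → ZMod 2))) G) :
    G = B p := by
  obtain ⟨⟨hnz, hsub, hdiv⟩, hlc, hred⟩ := hG
  -- existence of elements with each minimal leading monomial
  have exX : ∃ g ∈ G, leadMon m g = mE2 := by
    obtain ⟨g, hgG, hle⟩ := hdiv gX (gX_mem p) gX_ne_zero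
    rw [leadMon_gX] at hle
    refine ⟨g, hgG, ?_⟩
    rcases lead_not_small m p g (hnz g hgG) ((mem_I p g).mp (hsub hgG)) with h | h | h
    · exact le_antisymm hle h
    · exfalso; rw [mF2_le] at h
      have := (finsupp2_le.mp hle).2; simp at this; omega
    · exfalso; rw [mXY_le] at h
      have := (finsupp2_le.mp hle).2; simp at this; omega
  have exY : ∃ g ∈ G, leadMon m g = mF2 := by
    obtain ⟨g, hgG, hle⟩ := hdiv gY (gY_mem p) gY_ne_zero
    rw [leadMon_gY] at hle
    refine ⟨g, hgG, ?_⟩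
    rcases lead_not_small m p g (hnz g hgG) ((mem_I p g).mp (hsub hgG)) with h | h | h
    · exfalso; rw [mE2_le] at h
      have := (finsupp2_le.mp hle).1; simp at this; omega
    · exact le_antisymm hle h
    · exfalso; rw [mXY_le] at h
      have := (finsupp2_le.mp hle).1; simp at this; omega
  have exQ : ∃ g ∈ G, leadMon m g = mXY := by
    obtain ⟨g, hgG, hle⟩ := hdiv (gQ p) (gQ_mem p) (gQ_ne_zero p)
    rw [leadMon_gQ] at hle
    refine ⟨g, hgG, ?_⟩
    rcases lead_not_small m p g (hnz g hgG) ((mem_I p g).mp (hsub hgG)) with h | h | h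
    · exfalso; rw [mE2_le] at h
      have := (finsupp2_le.mp hle).1; simp at this; omega
    · exfalso; rw [mF2_le] at h
      have := (finsupp2_le.mp hle).2; simp at this; omega
    · exact le_antisymm hle h
  -- every leading monomial of G is one of the three
  have lead_mem : ∀ g ∈ G, leadMon m g = mE2 ∨ leadMon m g = mF2 ∨ leadMon m g = mXY := by
    intro g hgG
    rcases lead_not_small m p g (hnz g hgG) ((mem_I p g).mp (hsub hgG)) with h | h | h
    · left
      by_contra hne
      obtain ⟨g', hg'G, hg'⟩ := exX
      have hgg' : g' ≠ g := fun he => hne (by rw [← he]; exact hg')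
      exact hred g hgG g' hg'G hgg' (leadMon m g) (leadMon_mem_support m g (hnz g hgG))
        (by rw [hg']; exact h)
    · right; left
      by_contra hne
      obtain ⟨g', hg'G, hg'⟩ := exY
      have hgg' : g' ≠ g := fun he => hne (by rw [← he]; exact hg')
      exact hred g hgG g' hg'G hgg' (leadMon m g) (leadMon_mem_support m g (hnz g hgG))
        (by rw [hg']; exact h)
    · right; right
      by_contra hne
      obtain ⟨g', hg'G, hg'⟩ := exQ
      have hgg' : g' ≠ g := fun he => hne (by rw [← he]; exact hg')
      exact hred g hgG g' hg'G hgg' (leadMon m g) (leadMon_mem_support m g (hnz g hgG))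
        (by rw [hg']; exact h)
  -- matching lemmas
  have eqX : ∀ g ∈ G, leadMon m g = mE2 → g = gX := by
    intro g hgG hlead
    by_contra hne
    have hsub0 : g - gX ∈ vanishingIdeal (ZMod 2) ({p}ᶜ : Set (Fin 2 → ZMod 2)) :=
      Ideal.sub_mem _ (hsub hgG) (gX_mem p)
    have h0 : g - gX ≠ 0 := sub_ne_zero.mpr hne
    set u := leadMon m (g - gX) with hu
    have huS : u ∈ (g - gX).support := leadMon_mem_support m _ h0
    have hut : u ≠ mE2 := by
      intro h
      have hc : coeff mE2 (g - gX) = 0 := by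
        have hcg : coeff mE2 g = 1 := by
          have := hlc g hgG; rwa [leadCoeff, hlead] at this
        rw [MvPolynomial.coeff_sub, coeff_mE2_gX, hcg, sub_self]
      rw [← h] at hc
      exact (MvPolynomial.mem_support_iff.mp huS) hc
    have hU : mE2 ≤ u ∨ mF2 ≤ u ∨ mXY ≤ u :=
      lead_not_small m p _ h0 ((mem_I p _).mp hsub0)
    have humem : u ∈ g.support ∨ u ∈ gX.support := by
      have hne0 := MvPolynomial.mem_support_iff.mp huS
      rw [MvPolynomial.coeff_sub] at hne0
      by_contra hcon
      push_neg at hcon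
      rw [MvPolynomial.notMem_support_iff.mp hcon.1,
        MvPolynomial.notMem_support_iff.mp hcon.2, sub_self] at hne0
      exact hne0 rfl
    rcases humem with hin | hin
    · rcases hU with h | h | h
      · -- mE2 ≤ u and u in supp g with leadMon g = mE2 forces u = mE2
        have h1 : m.toSyn u ≤ m.toSyn (leadMon m g) := le_leadMon m g hin
        have h2 : m.toSyn (leadMon m g) ≤ m.toSyn u := by
          rw [hlead]; exact m.toSyn_monotone h
        exact hut (by rw [← hlead]; exact m.toSyn.injective (le_antisymm h1 h2))
      · obtain ⟨g', hg'G, hg'⟩ := exY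
        have hgg' : g' ≠ g := fun he => mE2_ne_mF2 (by rw [← hlead, ← he]; exact hg')
        exact hred g hgG g' hg'G hgg' u hin (by rw [hg']; exact h)
      · obtain ⟨g', hg'G, hg'⟩ := exQ
        have hgg' : g' ≠ g := fun he => mE2_ne_mXY (by rw [← hlead, ← he]; exact hg')
        exact hred g hgG g' hg'G hgg' u hin (by rw [hg']; exact h)
    · rcases Finset.mem_insert.mp (support_gX hin) with h' | h'
      · exact hut h'
      · rw [Finset.mem_singleton.mp h'] at hU
        rcases hU with h | h | h
        · rw [mE2_le] at h; simp at h
        · rw [mF2_le] at h; simp at h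
        · rw [mXY_le] at h; simp at h
  have eqY : ∀ g ∈ G, leadMon m g = mF2 → g = gY := by
    intro g hgG hlead
    by_contra hne
    have hsub0 : g - gY ∈ vanishingIdeal (ZMod 2) ({p}ᶜ : Set (Fin 2 → ZMod 2)) :=
      Ideal.sub_mem _ (hsub hgG) (gY_mem p)
    have h0 : g - gY ≠ 0 := sub_ne_zero.mpr hne
    set u := leadMon m (g - gY) with hu
    have huS : u ∈ (g - gY).support := leadMon_mem_support m _ h0
    have hut : u ≠ mF2 := by
      intro h
      have hc : coeff mF2 (g - gY) = 0 := by
        have hcg : coeff mF2 g = 1 := by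
          have := hlc g hgG; rwa [leadCoeff, hlead] at this
        rw [MvPolynomial.coeff_sub, coeff_mF2_gY, hcg, sub_self]
      rw [← h] at hc
      exact (MvPolynomial.mem_support_iff.mp huS) hc
    have hU : mE2 ≤ u ∨ mF2 ≤ u ∨ mXY ≤ u :=
      lead_not_small m p _ h0 ((mem_I p _).mp hsub0)
    have humem : u ∈ g.support ∨ u ∈ gY.support := by
      have hne0 := MvPolynomial.mem_support_iff.mp huS
      rw [MvPolynomial.coeff_sub] at hne0
      by_contra hcon
      push_neg at hcon
      rw [MvPolynomial.notMem_support_iff.mp hcon.1,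
        MvPolynomial.notMem_support_iff.mp hcon.2, sub_self] at hne0
      exact hne0 rfl
    rcases humem with hin | hin
    · rcases hU with h | h | h
      · obtain ⟨g', hg'G, hg'⟩ := exX
        have hgg' : g' ≠ g := fun he => mE2_ne_mF2 (by rw [← hlead, ← he]; exact hg'.symm)
        exact hred g hgG g' hg'G hgg' u hin (by rw [hg']; exact h)
      · have h1 : m.toSyn u ≤ m.toSyn (leadMon m g) := le_leadMon m g hin
        have h2 : m.toSyn (leadMon m g) ≤ m.toSyn u := by
          rw [hlead]; exact m.toSyn_monotone h
        exact hut (by rw [← hlead]; exact m.toSyn.injective (le_antisymm h1 h2))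
      · obtain ⟨g', hg'G, hg'⟩ := exQ
        have hgg' : g' ≠ g := fun he => mF2_ne_mXY (by rw [← hlead, ← he]; exact hg')
        exact hred g hgG g' hg'G hgg' u hin (by rw [hg']; exact h)
    · rcases Finset.mem_insert.mp (support_gY hin) with h' | h'
      · exact hut h'
      · rw [Finset.mem_singleton.mp h'] at hU
        rcases hU with h | h | h
        · rw [mE2_le] at h; simp at h
        · rw [mF2_le] at h; simp at h
        · rw [mXY_le] at h; simp at h
  have eqQ : ∀ g ∈ G, leadMon m g = mXY → g = gQ p := by
    intro g hgG hlead
    by_contra hne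
    have hsub0 : g - gQ p ∈ vanishingIdeal (ZMod 2) ({p}ᶜ : Set (Fin 2 → ZMod 2)) :=
      Ideal.sub_mem _ (hsub hgG) (gQ_mem p)
    have h0 : g - gQ p ≠ 0 := sub_ne_zero.mpr hne
    set u := leadMon m (g - gQ p) with hu
    have huS : u ∈ (g - gQ p).support := leadMon_mem_support m _ h0
    have hut : u ≠ mXY := by
      intro h
      have hc : coeff mXY (g - gQ p) = 0 := by
        have hcg : coeff mXY g = 1 := by
          have := hlc g hgG; rwa [leadCoeff, hlead] at this
        rw [MvPolynomial.coeff_sub, coeff_mXY_gQ, hcg, sub_self]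
      rw [← h] at hc
      exact (MvPolynomial.mem_support_iff.mp huS) hc
    have hU : mE2 ≤ u ∨ mF2 ≤ u ∨ mXY ≤ u :=
      lead_not_small m p _ h0 ((mem_I p _).mp hsub0)
    have humem : u ∈ g.support ∨ u ∈ (gQ p).support := by
      have hne0 := MvPolynomial.mem_support_iff.mp huS
      rw [MvPolynomial.coeff_sub] at hne0
      by_contra hcon
      push_neg at hcon
      rw [MvPolynomial.notMem_support_iff.mp hcon.1,
        MvPolynomial.notMem_support_iff.mp hcon.2, sub_self] at hne0
      exact hne0 rfl
    rcases humem with hin | hin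
    · rcases hU with h | h | h
      · obtain ⟨g', hg'G, hg'⟩ := exX
        have hgg' : g' ≠ g := fun he => mE2_ne_mXY (by rw [← hlead, ← he]; exact hg'.symm)
        exact hred g hgG g' hg'G hgg' u hin (by rw [hg']; exact h)
      · obtain ⟨g', hg'G, hg'⟩ := exY
        have hgg' : g' ≠ g := fun he => mF2_ne_mXY (by rw [← hlead, ← he]; exact hg'.symm)
        exact hred g hgG g' hg'G hgg' u hin (by rw [hg']; exact h)
      · have h1 : m.toSyn u ≤ m.toSyn (leadMon m g) := le_leadMon m g hin
        have h2 : m.toSyn (leadMon m g) ≤ m.toSyn u := by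
          rw [hlead]; exact m.toSyn_monotone h
        exact hut (by rw [← hlead]; exact m.toSyn.injective (le_antisymm h1 h2))
    · have h' := support_gQ p hin
      simp only [Finset.mem_insert, Finset.mem_singleton] at h'
      rcases h' with h' | h' | h' | h'
      · exact hut h'
      all_goals rw [h'] at hU
      all_goals rcases hU with h | h | h
      all_goals first
        | (rw [mE2_le] at h; simp at h)
        | (rw [mF2_le] at h; simp at h)
        | (rw [mXY_le] at h; simp at h)
  -- conclude
  ext g
  constructor
  · intro hgG
    rcases lead_mem g hgG with h | h | h
    · rw [eqX g hgG h]; simp [B]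
    · rw [eqY g hgG h]; simp [B]
    · rw [eqQ g hgG h]; simp [B]
  · intro hgB
    rcases mem_B hgB with rfl | rfl | rfl
    · obtain ⟨g', hg'G, hg'⟩ := exX
      rw [← eqX g' hg'G hg']; exact hg'G
    · obtain ⟨g', hg'G, hg'⟩ := exY
      rw [← eqY g' hg'G hg']; exact hg'G
    · obtain ⟨g', hg'G, hg'⟩ := exQ
      rw [← eqQ g' hg'G hg']; exact hg'G

end GBAux


/-- Every three-element subset of `(ZMod 2)²` has a vanishing ideal with exactly one
reduced Gröbner basis (the same for every monomial order). -/
theorem unique_reduced_GB_three_points_Z2_n2 (S : Set (Fin 2 → ZMod 2)) (hS : S.ncard = 3) :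
    numReducedGB (vanishingIdeal (ZMod 2) S) = 1 := by
  obtain ⟨p, rfl⟩ := GBAux.S_eq S hS
  rw [numReducedGB]
  have hset : {G : Finset (MvPolynomial (Fin 2) (ZMod 2)) |
      ∃ m : MonomialOrder.{0,0} (Fin 2),
        IsReducedGroebnerBasis m (vanishingIdeal (ZMod 2) ({p}ᶜ : Set (Fin 2 → ZMod 2))) G}
      = {GBAux.B p} := by
    ext G
    simp only [Set.mem_setOf_eq, Set.mem_singleton_iff]
    constructor
    · rintro ⟨m, hm⟩
      exact GBAux.RGB_unique m p G hm
    · rintro rfl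
      exact ⟨MonomialOrder.lex, GBAux.B_isRGB _ p⟩
  rw [hset, Set.ncard_singleton]
end

section
/- Let K = ZMod 2 and n = 3. The vanishing ideal I({(1,0,0), (0,1,0), (1,1,1)}) ⊆ MvPolynomial (Fin 3) K has exactly three distinct reduced Gröbner bases. -/
open MvPolynomial

namespace GB3

open Finsupp

variable {n : ℕ} {K : Type*} [CommSemiring K] (m : MonomialOrder (Fin n))

lemma leadMon_mem_support {f : MvPolynomial (Fin n) K} (hf : f ≠ 0) :
    leadMon m f ∈ f.support := by
  have hne : f.support.Nonempty := MvPolynomial.support_nonempty.mpr hf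
  obtain ⟨d, hd, hsup⟩ := Finset.exists_mem_eq_sup f.support hne (fun d => m.toSyn d)
  rw [leadMon, hsup, AddEquiv.symm_apply_apply]
  exact hd

lemma le_leadMon {f : MvPolynomial (Fin n) K} {d : Fin n →₀ ℕ} (hd : d ∈ f.support) :
    m.toSyn d ≤ m.toSyn (leadMon m f) := by
  rw [leadMon, AddEquiv.apply_symm_apply]
  exact Finset.le_sup hd

lemma leadCoeff_ne_zero {f : MvPolynomial (Fin n) K} (hf : f ≠ 0) : leadCoeff m f ≠ 0 := by
  have := leadMon_mem_support m hf
  rwa [MvPolynomial.mem_support_iff] at this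

lemma leadMon_eq {f : MvPolynomial (Fin n) K} {l : Fin n →₀ ℕ} (h1 : f.coeff l ≠ 0)
    (h2 : ∀ d ∈ f.support, m.toSyn d ≤ m.toSyn l) : leadMon m f = l := by
  apply m.toSyn.injective
  have hmem : l ∈ f.support := MvPolynomial.mem_support_iff.mpr h1
  have h3 : m.toSyn (leadMon m f) = f.support.sup (fun d => m.toSyn d) := by
    rw [leadMon, AddEquiv.apply_symm_apply]
  rw [h3]
  exact le_antisymm (Finset.sup_le h2) (Finset.le_sup hmem)

lemma toSyn_zero_le (d : Fin n →₀ ℕ) : (0 : m.syn) ≤ m.toSyn d := by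
  simpa using m.toSyn_monotone (zero_le d)

lemma toSyn_pos {d : Fin n →₀ ℕ} (hd : d ≠ 0) : (0 : m.syn) < m.toSyn d := by
  rcases (toSyn_zero_le m d).lt_or_eq with h | h
  · exact h
  · exact absurd (m.toSyn.injective (by rw [← h, map_zero])) hd

lemma prod_pow_single {K : Type*} [CommSemiring K] (s : Fin n → K) (j : Fin n) (a : ℕ) :
    (∏ v, s v ^ (Finsupp.single j a) v) = s j ^ a := by
  rw [Finset.prod_eq_single j]
  · simp
  · intro v _ hv; simp [Finsupp.single_apply, Ne.symm hv]
  · simp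

lemma coeff_eq_of_evals {K : Type*} [Field K] {f : MvPolynomial (Fin n) K}
    (s1 s2 : Fin n → K)
    (h1 : eval s1 f = 0) (h2 : eval s2 f = 0) (l : Fin n →₀ ℕ)
    (hsame : ∀ d ∈ f.support, d ≠ l → (∏ v, s1 v ^ d v) = ∏ v, s2 v ^ d v)
    (hdiff : (∏ v, s1 v ^ l v) ≠ ∏ v, s2 v ^ l v) :
    f.coeff l = 0 := by
  have key : ∑ d ∈ f.support, f.coeff d * ((∏ v, s1 v ^ d v) - ∏ v, s2 v ^ d v) =
      f.coeff l * ((∏ v, s1 v ^ l v) - ∏ v, s2 v ^ l v) := by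
    apply Finset.sum_eq_single l
    · intro d hd hdl; rw [hsame d hd hdl]; ring
    · intro h; rw [MvPolynomial.notMem_support_iff.mp h]; ring
  have key2 : ∑ d ∈ f.support, f.coeff d * ((∏ v, s1 v ^ d v) - ∏ v, s2 v ^ d v) =
      eval s1 f - eval s2 f := by
    rw [MvPolynomial.eval_eq', MvPolynomial.eval_eq', ← Finset.sum_sub_distrib]
    exact Finset.sum_congr rfl fun d _ => by ring
  rw [key2, h1, h2, sub_zero] at key
  rcases mul_eq_zero.mp key.symm with h | h
  · exact h
  · exact absurd (sub_eq_zero.mp h) hdiff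




open Finsupp

lemma fne {u d : Fin 3 →₀ ℕ} (v : Fin 3) (h : u v ≠ d v) : u ≠ d :=
  fun he => h (by rw [he])

lemma not_le_at {u d : Fin 3 →₀ ℕ} (v : Fin 3) (h : d v < u v) : ¬ u ≤ d :=
  fun hle => absurd (Finsupp.le_def.mp hle v) (not_le.mpr h)

section IJK

variable {i j k : Fin 3} (hij : i ≠ j) (hik : i ≠ k) (hjk : j ≠ k)
  (hcov : ∀ v : Fin 3, v = i ∨ v = j ∨ v = k)

include hij hik hjk hcov

lemma mem_L {d : Fin 3 →₀ ℕ}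
    (h : ¬ (single i 1 ≤ d ∨ single j 2 ≤ d ∨ single k 2 ≤ d ∨
      single j 1 + single k 1 ≤ d)) :
    d = 0 ∨ d = single j 1 ∨ d = single k 1 := by
  push_neg at h
  obtain ⟨h1, h2, h3, h4⟩ := h
  rw [Finsupp.single_le_iff, not_le] at h1 h2 h3
  have hjk' : d j = 0 ∨ d k = 0 := by
    by_contra hc
    push_neg at hc
    obtain ⟨hcj, hck⟩ := hc
    apply h4
    rw [Finsupp.le_def]
    intro v
    rcases hcov v with rfl | rfl | rfl <;>
      simp [Finsupp.add_apply, Finsupp.single_apply, hij, hik, hjk,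
        Ne.symm hij, Ne.symm hik, Ne.symm hjk] <;>
      omega
  have hd : ∀ (x y : ℕ), d j = x → d k = y → d = single j x + single k y := by
    intro x y hx hy
    ext v
    rcases hcov v with rfl | rfl | rfl <;>
      simp [Finsupp.add_apply, Finsupp.single_apply, hij, hik, hjk,
        Ne.symm hij, Ne.symm hik, Ne.symm hjk, hx, hy] <;>
      omega
  have hdj : d j = 0 ∨ d j = 1 := by omega
  have hdk : d k = 0 ∨ d k = 1 := by omega
  rcases hdj with hx | hx <;> rcases hdk with hy | hy
  · left; have := hd 0 0 hx hy; simpa using this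
  · right; right; have := hd 0 1 hx hy; simpa using this
  · right; left; have := hd 1 0 hx hy; simpa using this
  · exfalso; omega

end IJK




section IJK
variable {i j k : Fin 3} (hij : i ≠ j) (hik : i ≠ k) (hjk : j ≠ k)
  (hcov : ∀ v : Fin 3, v = i ∨ v = j ∨ v = k)

include hij hik hjk hcov in
lemma div_pin {mu nu : Fin 3 →₀ ℕ}
    (hmu : mu = single i 1 ∨ mu = single j 2 ∨ mu = single k 2 ∨
      mu = single j 1 + single k 1)
    (hnu : single i 1 ≤ nu ∨ single j 2 ≤ nu ∨ single k 2 ≤ nu ∨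
      single j 1 + single k 1 ≤ nu)
    (h : nu ≤ mu) : nu = mu := by
  have hi := Finsupp.le_def.mp h i
  have hj := Finsupp.le_def.mp h j
  have hk := Finsupp.le_def.mp h k
  have hnu' : 1 ≤ nu i ∨ 2 ≤ nu j ∨ 2 ≤ nu k ∨ (1 ≤ nu j ∧ 1 ≤ nu k) := by
    rcases hnu with h' | h' | h' | h'
    · exact Or.inl (Finsupp.single_le_iff.mp h')
    · exact Or.inr (Or.inl (Finsupp.single_le_iff.mp h'))
    · exact Or.inr (Or.inr (Or.inl (Finsupp.single_le_iff.mp h')))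
    · refine Or.inr (Or.inr (Or.inr ⟨?_, ?_⟩))
      · have := Finsupp.le_def.mp h' j
        simpa [Finsupp.add_apply, Finsupp.single_apply, hjk, Ne.symm hjk] using this
      · have := Finsupp.le_def.mp h' k
        simpa [Finsupp.add_apply, Finsupp.single_apply, hjk, Ne.symm hjk] using this
  have key : nu i = mu i ∧ nu j = mu j ∧ nu k = mu k := by
    rcases hmu with rfl | rfl | rfl | rfl <;>
      simp only [Finsupp.single_apply, Finsupp.add_apply, eq_self_iff_true, if_true, if_pos rfl, if_neg hij,
        if_neg hik, if_neg hjk, if_neg (Ne.symm hij), if_neg (Ne.symm hik),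
        if_neg (Ne.symm hjk)] at hi hj hk ⊢ <;>
      omega
  ext v
  rcases hcov v with rfl | rfl | rfl
  · exact key.1
  · exact key.2.1
  · exact key.2.2
end IJK

open MvPolynomial Finsupp


def pts : Set (Fin 3 → ZMod 2) := {![1, 0, 0], ![0, 1, 0], ![1, 1, 1]}

noncomputable def Ivt : Ideal (MvPolynomial (Fin 3) (ZMod 2)) := vanishingIdeal (ZMod 2) pts

noncomputable def gl (i j k : Fin 3) : MvPolynomial (Fin 3) (ZMod 2) :=
  monomial (single i 1) 1 + monomial (single j 1) 1 + monomial (single k 1) 1 + monomial 0 1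

noncomputable def gsq (v : Fin 3) : MvPolynomial (Fin 3) (ZMod 2) :=
  monomial (single v 2) 1 + monomial (single v 1) 1

noncomputable def gpr (j k : Fin 3) (a b c : ZMod 2) : MvPolynomial (Fin 3) (ZMod 2) :=
  monomial (single j 1 + single k 1) 1 + monomial (single j 1) a +
    monomial (single k 1) b + monomial 0 c

open scoped Classical in
noncomputable def GBset (i j k : Fin 3) (a b c : ZMod 2) :
    Finset (MvPolynomial (Fin 3) (ZMod 2)) :=
  {gl i j k, gsq j, gsq k, gpr j k a b c}

lemma eval_monomial' (x : Fin 3 → ZMod 2) (d : Fin 3 →₀ ℕ) (a : ZMod 2) :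
    eval x (monomial d a) = a * ∏ v, x v ^ d v := by
  rw [eval_monomial, Finsupp.prod_fintype]
  intro v; simp

lemma prod_pow_single' (x : Fin 3 → ZMod 2) (j : Fin 3) (n : ℕ) :
    (∏ v, x v ^ (single j n) v) = x j ^ n := by
  rw [Finset.prod_eq_single j]
  · simp
  · intro v _ hv; simp [Finsupp.single_apply, Ne.symm hv]
  · simp

lemma prod_pow_add (x : Fin 3 → ZMod 2) (d1 d2 : Fin 3 →₀ ℕ) :
    (∏ v, x v ^ (d1 + d2) v) = (∏ v, x v ^ d1 v) * ∏ v, x v ^ d2 v := by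
  rw [← Finset.prod_mul_distrib]
  exact Finset.prod_congr rfl fun v _ => by rw [Finsupp.add_apply, pow_add]

lemma eval_gl (i j k : Fin 3) (x : Fin 3 → ZMod 2) :
    eval x (gl i j k) = x i + x j + x k + 1 := by
  simp [gl, eval_monomial', prod_pow_single']

lemma eval_gsq (v : Fin 3) (x : Fin 3 → ZMod 2) :
    eval x (gsq v) = x v ^ 2 + x v := by
  simp [gsq, eval_monomial', prod_pow_single']

lemma eval_gpr (j k : Fin 3) (a b c : ZMod 2) (x : Fin 3 → ZMod 2) :
    eval x (gpr j k a b c) = x j * x k + a * x j + b * x k + c := by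
  simp only [gpr, map_add, eval_monomial', prod_pow_add, prod_pow_single', Finsupp.coe_zero, Pi.zero_apply, pow_zero, Finset.prod_const_one]
  ring

lemma mem_pts (x : Fin 3 → ZMod 2) :
    x ∈ pts ↔ x = ![1, 0, 0] ∨ x = ![0, 1, 0] ∨ x = ![1, 1, 1] := by
  simp [pts]

lemma mem_Ivt_iff {f : MvPolynomial (Fin 3) (ZMod 2)} :
    f ∈ Ivt ↔ eval ![1, 0, 0] f = 0 ∧ eval ![0, 1, 0] f = 0 ∧ eval ![1, 1, 1] f = 0 := by
  rw [Ivt, mem_vanishingIdeal_iff]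
  constructor
  · intro h
    exact ⟨h _ (by simp [pts]), h _ (by simp [pts]), h _ (by simp [pts])⟩
  · rintro ⟨h1, h2, h3⟩ x hx
    rcases (mem_pts x).mp hx with rfl | rfl | rfl <;> assumption

lemma eval_Ivt {f : MvPolynomial (Fin 3) (ZMod 2)} (hf : f ∈ Ivt) {x : Fin 3 → ZMod 2}
    (hx : x ∈ pts) : eval x f = 0 := by
  rw [Ivt, mem_vanishingIdeal_iff] at hf
  exact hf x hx

lemma sum3 : ∀ (i j k : Fin 3), i ≠ j → i ≠ k → j ≠ k → ∀ (x : Fin 3 → ZMod 2),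
    x i + x j + x k = x 0 + x 1 + x 2 := by decide

lemma gl_mem (i j k : Fin 3) (hij : i ≠ j) (hik : i ≠ k) (hjk : j ≠ k) :
    gl i j k ∈ Ivt := by
  rw [mem_Ivt_iff]
  refine ⟨?_, ?_, ?_⟩ <;> rw [eval_gl, sum3 i j k hij hik hjk] <;> decide

lemma gsq_mem (v : Fin 3) : gsq v ∈ Ivt := by
  have h : ∀ t : ZMod 2, t ^ 2 + t = 0 := by decide
  rw [mem_Ivt_iff]
  exact ⟨by rw [eval_gsq]; exact h _, by rw [eval_gsq]; exact h _, by rw [eval_gsq]; exact h _⟩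






lemma sne1 {u w : Fin 3} (h : u ≠ w) {a : ℕ} (ha : a ≠ 0) (b : ℕ) :
    single u a ≠ single w b :=
  fne u (by simpa [Finsupp.single_apply, Ne.symm h] using ha)

lemma single_ne_zero' (v : Fin 3) {a : ℕ} (ha : a ≠ 0) : single v a ≠ (0 : Fin 3 →₀ ℕ) :=
  fne v (by simpa [Finsupp.single_apply] using ha)

section IJK2
variable {i j k : Fin 3} (hij : i ≠ j) (hik : i ≠ k) (hjk : j ≠ k)

section NE
include hjk

lemma njk_j : single j 1 + single k 1 ≠ single j (1:ℕ) :=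
  fne k (by simp [Finsupp.add_apply, Finsupp.single_apply, hjk, Ne.symm hjk])

lemma njk_k : single j 1 + single k 1 ≠ single k (1:ℕ) :=
  fne j (by simp [Finsupp.add_apply, Finsupp.single_apply, hjk, Ne.symm hjk])

lemma njk_0 : single j 1 + single k 1 ≠ (0 : Fin 3 →₀ ℕ) :=
  fne j (by simp [Finsupp.add_apply, Finsupp.single_apply, hjk, Ne.symm hjk])

lemma njk_2j : single j 1 + single k 1 ≠ single j (2:ℕ) :=
  fne k (by simp [Finsupp.add_apply, Finsupp.single_apply, hjk, Ne.symm hjk])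

lemma njk_2k : single j 1 + single k 1 ≠ single k (2:ℕ) :=
  fne j (by simp [Finsupp.add_apply, Finsupp.single_apply, hjk, Ne.symm hjk])

end NE

include hij hjk in
lemma njk_i : single j 1 + single k 1 ≠ single i (1:ℕ) :=
  fne j (by simp [Finsupp.add_apply, Finsupp.single_apply, hij, Ne.symm hjk])

-- coefficient lemmas
include hij hik hjk in
lemma coeff_gl_i : (gl i j k).coeff (single i 1) = 1 := by
  rw [gl]
  simp only [coeff_add, coeff_monomial, if_pos rfl,
    if_neg (sne1 (Ne.symm hij) one_ne_zero 1), if_neg (sne1 (Ne.symm hik) one_ne_zero 1),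
    if_neg (Ne.symm (single_ne_zero' i one_ne_zero))]
  norm_num

lemma coeff_gsq (v : Fin 3) : (gsq v).coeff (single v 2) = 1 := by
  rw [gsq]
  simp only [coeff_add, coeff_monomial, if_pos rfl,
    if_neg (fne v (by simp [Finsupp.single_apply] : (single v 1) v ≠ (single v 2) v))]
  norm_num

include hjk in
lemma coeff_gpr {a b c : ZMod 2} :
    (gpr j k a b c).coeff (single j 1 + single k 1) = 1 := by
  rw [gpr]
  simp only [coeff_add, coeff_monomial, if_pos rfl,
    if_neg (Ne.symm (njk_j hjk)), if_neg (Ne.symm (njk_k hjk)),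
    if_neg (Ne.symm (njk_0 hjk))]
  norm_num

-- support lemmas
lemma supp_gl {d : Fin 3 →₀ ℕ} (hd : d ∈ (gl i j k).support) :
    d = single i 1 ∨ d = single j 1 ∨ d = single k 1 ∨ d = 0 := by
  by_contra h
  push_neg at h
  obtain ⟨h1, h2, h3, h4⟩ := h
  rw [MvPolynomial.mem_support_iff] at hd
  apply hd
  rw [gl]
  simp only [coeff_add, coeff_monomial, if_neg (Ne.symm h1), if_neg (Ne.symm h2),
    if_neg (Ne.symm h3), if_neg (Ne.symm h4)]
  norm_num

lemma supp_gsq {v : Fin 3} {d : Fin 3 →₀ ℕ} (hd : d ∈ (gsq v).support) :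
    d = single v 2 ∨ d = single v 1 := by
  by_contra h
  push_neg at h
  obtain ⟨h1, h2⟩ := h
  rw [MvPolynomial.mem_support_iff] at hd
  apply hd
  rw [gsq]
  simp only [coeff_add, coeff_monomial, if_neg (Ne.symm h1), if_neg (Ne.symm h2)]
  norm_num

lemma supp_gpr {a b c : ZMod 2} {d : Fin 3 →₀ ℕ} (hd : d ∈ (gpr j k a b c).support) :
    d = single j 1 + single k 1 ∨ d = single j 1 ∨ d = single k 1 ∨ d = 0 := by
  by_contra h
  push_neg at h
  obtain ⟨h1, h2, h3, h4⟩ := h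
  rw [MvPolynomial.mem_support_iff] at hd
  apply hd
  rw [gpr]
  simp only [coeff_add, coeff_monomial, if_neg (Ne.symm h1), if_neg (Ne.symm h2),
    if_neg (Ne.symm h3), if_neg (Ne.symm h4)]
  norm_num

-- nonzeroness
include hij hik hjk in
lemma gl_ne : gl i j k ≠ 0 := fun h =>
  one_ne_zero (α := ZMod 2) (by rw [← coeff_gl_i hij hik hjk, h, coeff_zero])

lemma gsq_ne (v : Fin 3) : gsq v ≠ 0 := fun h =>
  one_ne_zero (α := ZMod 2) (by rw [← coeff_gsq v, h, coeff_zero])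

include hjk in
lemma gpr_ne {a b c : ZMod 2} : gpr j k a b c ≠ 0 := fun h =>
  one_ne_zero (α := ZMod 2) (by rw [← coeff_gpr hjk (a := a) (b := b) (c := c), h, coeff_zero])

-- leadMon lemmas
variable {m : MonomialOrder (Fin 3)}

include hij hik hjk in
lemma leadMon_gl (hbj : m.toSyn (single j 1) < m.toSyn (single i 1))
    (hbk : m.toSyn (single k 1) < m.toSyn (single i 1)) :
    leadMon m (gl i j k) = single i 1 := by
  apply leadMon_eq
  · rw [coeff_gl_i hij hik hjk]; exact one_ne_zero
  · intro d hd
    rcases supp_gl hd with rfl | rfl | rfl | rfl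
    · exact le_refl _
    · exact le_of_lt hbj
    · exact le_of_lt hbk
    · rw [map_zero]; exact toSyn_zero_le m _

lemma leadMon_gsq (v : Fin 3) : leadMon m (gsq v) = single v 2 := by
  apply leadMon_eq
  · rw [coeff_gsq v]; exact one_ne_zero
  · intro d hd
    rcases supp_gsq hd with rfl | rfl
    · exact le_refl _
    · exact m.toSyn_monotone (Finsupp.single_le_iff.mpr (by simp [Finsupp.single_apply]))

include hjk in
lemma leadMon_gpr {a b c : ZMod 2} :
    leadMon m (gpr j k a b c) = single j 1 + single k 1 := by
  apply leadMon_eq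
  · rw [coeff_gpr hjk]; exact one_ne_zero
  · intro d hd
    rcases supp_gpr hd with rfl | rfl | rfl | rfl
    · exact le_refl _
    · exact m.toSyn_monotone (Finsupp.le_def.mpr fun v => by
        simp only [Finsupp.add_apply]; omega)
    · exact m.toSyn_monotone (Finsupp.le_def.mpr fun v => by
        simp only [Finsupp.add_apply]; omega)
    · rw [map_zero]; exact toSyn_zero_le m _

end IJK2

-- key lemmas about leading monomials of elements of Ivt
lemma leadMon_ne_zero {m : MonomialOrder (Fin 3)} {f : MvPolynomial (Fin 3) (ZMod 2)}
    (hf : f ≠ 0) (hfI : f ∈ Ivt) : leadMon m f ≠ 0 := by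
  intro hlead
  have hsupp : ∀ d ∈ f.support, d = 0 := by
    intro d hd
    have h1 := le_leadMon m hd
    rw [hlead, map_zero] at h1
    have h2 : m.toSyn d = m.toSyn 0 := by
      rw [map_zero]; exact le_antisymm h1 (toSyn_zero_le m d)
    exact m.toSyn.injective h2
  have hfC : f = MvPolynomial.C (f.coeff 0) := by
    apply MvPolynomial.ext
    intro d
    by_cases hd : d = 0
    · subst hd; simp
    · rw [MvPolynomial.coeff_C, if_neg (fun h => hd h.symm)]
      exact MvPolynomial.notMem_support_iff.mp (fun hmem => hd (hsupp d hmem))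
  have h3 : eval ![1, 1, 1] f = f.coeff 0 := by rw [hfC]; simp
  have h4 := eval_Ivt hfI (x := ![1, 1, 1]) (by simp [pts])
  have h5 : f.coeff 0 ≠ 0 := by
    have := leadCoeff_ne_zero m hf
    rwa [leadCoeff, hlead] at this
  exact h5 (by rw [← h3, h4])

lemma leadMon_ne_single {m : MonomialOrder (Fin 3)} {f : MvPolynomial (Fin 3) (ZMod 2)}
    (hf : f ≠ 0) (hfI : f ∈ Ivt) {i j : Fin 3}
    (hbig : m.toSyn (single j 1) < m.toSyn (single i 1))
    (s1 s2 : Fin 3 → ZMod 2) (hs1 : s1 ∈ pts) (hs2 : s2 ∈ pts)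
    (hd12 : s1 j ≠ s2 j) (hsame : ∀ v, v ≠ i → v ≠ j → s1 v = s2 v) :
    leadMon m f ≠ single j 1 := by
  intro hlead
  have hc : f.coeff (single j 1) ≠ 0 := by
    have := leadCoeff_ne_zero m hf
    rwa [leadCoeff, hlead] at this
  apply hc
  apply coeff_eq_of_evals s1 s2 (eval_Ivt hfI hs1) (eval_Ivt hfI hs2)
  · intro d hd hdl
    have hle : m.toSyn d ≤ m.toSyn (single j 1) := by
      rw [← hlead]; exact le_leadMon m hd
    have hdij : d i = 0 ∧ d j = 0 := by
      constructor
      · by_contra h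
        have h1 : single i 1 ≤ d := Finsupp.single_le_iff.mpr (by omega)
        exact absurd (le_trans (m.toSyn_monotone h1) hle) (not_le.mpr hbig)
      · by_contra h
        have h1 : single j 1 ≤ d := Finsupp.single_le_iff.mpr (by omega)
        exact hdl (m.toSyn.injective (le_antisymm hle (m.toSyn_monotone h1)))
    apply Finset.prod_congr rfl
    intro v _
    by_cases hvi : v = i
    · subst hvi; rw [hdij.1]; simp
    by_cases hvj : v = j
    · subst hvj; rw [hdij.2]; simp
    · rw [hsame v hvi hvj]
  · rw [prod_pow_single, prod_pow_single, pow_one, pow_one]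
    exact hd12



lemma eq_three_monomials {j k : Fin 3} (hjk : j ≠ k) {h : MvPolynomial (Fin 3) (ZMod 2)}
    (hsupp : ∀ d ∈ h.support, d = 0 ∨ d = single j 1 ∨ d = single k 1) :
    h = monomial (single j 1) (h.coeff (single j 1)) +
        monomial (single k 1) (h.coeff (single k 1)) + monomial 0 (h.coeff 0) := by
  apply MvPolynomial.ext
  intro d
  rw [coeff_add, coeff_add, coeff_monomial, coeff_monomial, coeff_monomial]
  by_cases h1 : d = single j 1
  · subst h1
    rw [if_pos rfl, if_neg (sne1 (Ne.symm hjk) one_ne_zero 1),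
      if_neg (Ne.symm (single_ne_zero' j one_ne_zero))]
    ring
  by_cases h2 : d = single k 1
  · subst h2
    rw [if_neg (sne1 hjk one_ne_zero 1), if_pos rfl,
      if_neg (Ne.symm (single_ne_zero' k one_ne_zero))]
    ring
  by_cases h3 : d = 0
  · subst h3
    rw [if_neg (single_ne_zero' j one_ne_zero), if_neg (single_ne_zero' k one_ne_zero),
      if_pos rfl]
    ring
  · rw [if_neg (fun hh => h1 hh.symm), if_neg (fun hh => h2 hh.symm),
      if_neg (fun hh => h3 hh.symm)]
    have hns : d ∉ h.support := fun hmem => by rcases hsupp d hmem with h' | h' | h' <;> tauto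
    rw [MvPolynomial.notMem_support_iff.mp hns]
    ring

set_option maxHeartbeats 2000000 in
lemma master {m : MonomialOrder (Fin 3)} {i j k : Fin 3}
    (hij : i ≠ j) (hik : i ≠ k) (hjk : j ≠ k)
    (hcov : ∀ v : Fin 3, v = i ∨ v = j ∨ v = k)
    (hbj : m.toSyn (single j 1) < m.toSyn (single i 1))
    (hbk : m.toSyn (single k 1) < m.toSyn (single i 1))
    {a b c : ZMod 2} (hq : gpr j k a b c ∈ Ivt)
    (s1 s2 : Fin 3 → ZMod 2) (hs1 : s1 ∈ pts) (hs2 : s2 ∈ pts)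
    (hd12 : s1 j ≠ s2 j) (hsame12 : ∀ v, v ≠ i → v ≠ j → s1 v = s2 v)
    (t1 t2 : Fin 3 → ZMod 2) (ht1 : t1 ∈ pts) (ht2 : t2 ∈ pts)
    (hd34 : t1 k ≠ t2 k) (hsame34 : ∀ v, v ≠ i → v ≠ k → t1 v = t2 v)
    (huniq : ∀ A B C : ZMod 2, (∀ s ∈ pts, A * s j + B * s k + C = 0) →
      A = 0 ∧ B = 0 ∧ C = 0)
    (G : Finset (MvPolynomial (Fin 3) (ZMod 2))) :
    IsReducedGroebnerBasis m Ivt G ↔ G = GBset i j k a b c := by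
  have hL : ∀ f : MvPolynomial (Fin 3) (ZMod 2), f ∈ Ivt → f ≠ 0 →
      (single i 1 ≤ leadMon m f ∨ single j 2 ≤ leadMon m f ∨ single k 2 ≤ leadMon m f ∨
        single j 1 + single k 1 ≤ leadMon m f) := by
    intro f hfI hf
    by_contra h
    rcases mem_L hij hik hjk hcov h with h0 | h0 | h0
    · exact leadMon_ne_zero hf hfI h0
    · exact leadMon_ne_single hf hfI hbj s1 s2 hs1 hs2 hd12 hsame12 h0
    · exact leadMon_ne_single hf hfI hbk t1 t2 ht1 ht2 hd34 hsame34 h0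
  have hmemset : ∀ g, g ∈ GBset i j k a b c ↔
      g = gl i j k ∨ g = gsq j ∨ g = gsq k ∨ g = gpr j k a b c := by
    intro g; simp [GBset]
  have hLgl : leadMon m (gl i j k) = single i 1 := leadMon_gl hij hik hjk hbj hbk
  have hLpr : leadMon m (gpr j k a b c) = single j 1 + single k 1 := leadMon_gpr hjk
  constructor
  · -- uniqueness
    rintro ⟨⟨hGne, hGI, hGB⟩, hGlc, hGred⟩
    have step1 : ∀ f0 ∈ Ivt, f0 ≠ 0 →
        (leadMon m f0 = single i 1 ∨ leadMon m f0 = single j 2 ∨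
          leadMon m f0 = single k 2 ∨ leadMon m f0 = single j 1 + single k 1) →
        ∃ g ∈ G, leadMon m g = leadMon m f0 := by
      intro f0 hf0I hf0 hmuL
      obtain ⟨g, hgG, hgle⟩ := hGB f0 hf0I hf0
      refine ⟨g, hgG, ?_⟩
      exact div_pin hij hik hjk hcov hmuL
        (hL g (hGI (Finset.mem_coe.mpr hgG)) (hGne g hgG)) hgle
    obtain ⟨gA, hgAG, hgA⟩ := step1 _ (gl_mem i j k hij hik hjk) (gl_ne hij hik hjk)
      (by rw [hLgl]; exact Or.inl rfl)
    rw [hLgl] at hgA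
    obtain ⟨gB, hgBG, hgB⟩ := step1 _ (gsq_mem j) (gsq_ne j)
      (by rw [leadMon_gsq j]; exact Or.inr (Or.inl rfl))
    rw [leadMon_gsq j] at hgB
    obtain ⟨gC, hgCG, hgC⟩ := step1 _ (gsq_mem k) (gsq_ne k)
      (by rw [leadMon_gsq k]; exact Or.inr (Or.inr (Or.inl rfl)))
    rw [leadMon_gsq k] at hgC
    obtain ⟨gD, hgDG, hgD⟩ := step1 _ hq (gpr_ne hjk)
      (by rw [hLpr]; exact Or.inr (Or.inr (Or.inr rfl)))
    rw [hLpr] at hgD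
    -- step 2 : support pinning
    have step2 : ∀ g ∈ G, ∀ d ∈ g.support, d ≠ leadMon m g →
        d = 0 ∨ d = single j 1 ∨ d = single k 1 := by
      intro g hgG d hd hdne
      by_contra hcon
      push_neg at hcon
      have hdL : single i 1 ≤ d ∨ single j 2 ≤ d ∨ single k 2 ≤ d ∨
          single j 1 + single k 1 ≤ d := by
        by_contra h'
        rcases mem_L hij hik hjk hcov h' with h0 | h0 | h0 <;> tauto
      have hkey : ∀ g' ∈ G, leadMon m g' ≤ d → False := by
        intro g' hg'G hg'le
        rcases eq_or_ne g' g with rfl | hne'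
        · have h1 : m.toSyn d ≤ m.toSyn (leadMon m g') := le_leadMon m hd
          have h2 : m.toSyn (leadMon m g') ≤ m.toSyn d := m.toSyn_monotone hg'le
          exact hdne (m.toSyn.injective (le_antisymm h1 h2))
        · exact hGred g hgG g' hg'G hne' d hd hg'le
      rcases hdL with h' | h' | h' | h'
      · exact hkey gA hgAG (by rw [hgA]; exact h')
      · exact hkey gB hgBG (by rw [hgB]; exact h')
      · exact hkey gC hgCG (by rw [hgC]; exact h')
      · exact hkey gD hgDG (by rw [hgD]; exact h')
    -- step 3 : identification
    have step3 : ∀ g ∈ G, ∀ g0 : MvPolynomial (Fin 3) (ZMod 2), g0 ∈ Ivt →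
        leadMon m g = leadMon m g0 → g0.coeff (leadMon m g0) = 1 →
        (∀ d ∈ g0.support, d = leadMon m g0 ∨ d = 0 ∨ d = single j 1 ∨ d = single k 1) →
        g = g0 := by
      intro g hgG g0 hg0I hlead hc0 hs0
      have hgI : g ∈ Ivt := hGI (Finset.mem_coe.mpr hgG)
      have hhI : g - g0 ∈ Ivt := sub_mem hgI hg0I
      have hsupp : ∀ d ∈ (g - g0).support, d = 0 ∨ d = single j 1 ∨ d = single k 1 := by
        intro d hd
        by_contra hcon
        push_neg at hcon
        apply MvPolynomial.mem_support_iff.mp hd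
        rw [MvPolynomial.coeff_sub]
        by_cases hdmu : d = leadMon m g0
        · have hcg : g.coeff d = 1 := by
            have := hGlc g hgG
            rwa [leadCoeff, hlead, ← hdmu] at this
          rw [hcg, hdmu, hc0]
          ring
        · have hcg : g.coeff d = 0 := by
            rw [← MvPolynomial.notMem_support_iff]
            intro hmem
            rcases step2 g hgG d hmem (by rw [hlead]; exact hdmu) with h' | h' | h' <;> tauto
          have hcg0 : g0.coeff d = 0 := by
            rw [← MvPolynomial.notMem_support_iff]
            intro hmem
            rcases hs0 d hmem with h' | h' | h' | h' <;> tauto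
          rw [hcg, hcg0]
          ring
      have hexp := eq_three_monomials hjk hsupp
      have hev : ∀ s ∈ pts, (g - g0).coeff (single j 1) * s j +
          (g - g0).coeff (single k 1) * s k + (g - g0).coeff 0 = 0 := by
        intro s hs
        have hz := eval_Ivt hhI hs
        rw [hexp] at hz
        simp only [map_add, eval_monomial', prod_pow_single', pow_one,
          Finsupp.coe_zero, Pi.zero_apply, pow_zero, Finset.prod_const_one, mul_one] at hz
        convert hz using 2 <;> ring
      obtain ⟨hA, hB, hC⟩ := huniq _ _ _ hev
      have hzero : g - g0 = 0 := by
        rw [hexp, hA, hB, hC]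
        simp
      exact sub_eq_zero.mp hzero
    have hgAgl : gA = gl i j k := by
      refine step3 gA hgAG _ (gl_mem i j k hij hik hjk) (by rw [hgA, hLgl]) ?_ ?_
      · rw [hLgl]; exact coeff_gl_i hij hik hjk
      · rw [hLgl]; intro d hd; rcases supp_gl hd with h' | h' | h' | h' <;> tauto
    have hgBgl : gB = gsq j := by
      refine step3 gB hgBG _ (gsq_mem j) (by rw [hgB, leadMon_gsq j]) ?_ ?_
      · rw [leadMon_gsq j]; exact coeff_gsq j
      · rw [leadMon_gsq j]; intro d hd; rcases supp_gsq hd with h' | h' <;> tauto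
    have hgCgl : gC = gsq k := by
      refine step3 gC hgCG _ (gsq_mem k) (by rw [hgC, leadMon_gsq k]) ?_ ?_
      · rw [leadMon_gsq k]; exact coeff_gsq k
      · rw [leadMon_gsq k]; intro d hd; rcases supp_gsq hd with h' | h' <;> tauto
    have hgDgl : gD = gpr j k a b c := by
      refine step3 gD hgDG _ hq (by rw [hgD, hLpr]) ?_ ?_
      · rw [hLpr]; exact coeff_gpr hjk
      · rw [hLpr]; intro d hd; rcases supp_gpr hd with h' | h' | h' | h' <;> tauto
    apply Finset.Subset.antisymm
    · intro g hgG
      have hgI : g ∈ Ivt := hGI (Finset.mem_coe.mpr hgG)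
      have hgne := hGne g hgG
      have hself : leadMon m g ∈ g.support := leadMon_mem_support m hgne
      have hident : ∀ g' ∈ G, leadMon m g' ≤ leadMon m g → g = g' := by
        intro g' hg'G hle
        rcases eq_or_ne g' g with rfl | hne'
        · rfl
        · exact absurd hle (hGred g hgG g' hg'G hne' _ hself)
      rw [hmemset]
      rcases hL g hgI hgne with h' | h' | h' | h'
      · exact Or.inl (by rw [hident gA hgAG (by rw [hgA]; exact h'), hgAgl])
      · exact Or.inr (Or.inl (by rw [hident gB hgBG (by rw [hgB]; exact h'), hgBgl]))
      · exact Or.inr (Or.inr (Or.inl (by rw [hident gC hgCG (by rw [hgC]; exact h'), hgCgl])))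
      · exact Or.inr (Or.inr (Or.inr (by rw [hident gD hgDG (by rw [hgD]; exact h'), hgDgl])))
    · intro g hg
      rcases (hmemset g).mp hg with rfl | rfl | rfl | rfl
      · exact hgAgl ▸ hgAG
      · exact hgBgl ▸ hgBG
      · exact hgCgl ▸ hgCG
      · exact hgDgl ▸ hgDG
  · -- existence
    rintro rfl
    have hmem : ∀ g ∈ GBset i j k a b c, g ∈ Ivt := by
      intro g hg
      rcases (hmemset g).mp hg with rfl | rfl | rfl | rfl
      exacts [gl_mem i j k hij hik hjk, gsq_mem j, gsq_mem k, hq]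
    refine ⟨⟨?_, ?_, ?_⟩, ?_, ?_⟩
    · intro g hg
      rcases (hmemset g).mp hg with rfl | rfl | rfl | rfl
      exacts [gl_ne hij hik hjk, gsq_ne j, gsq_ne k, gpr_ne hjk]
    · intro g hg
      exact hmem g (Finset.mem_coe.mp hg)
    · intro f hfI hf
      rcases hL f hfI hf with h' | h' | h' | h'
      · exact ⟨gl i j k, (hmemset _).mpr (Or.inl rfl), by rw [hLgl]; exact h'⟩
      · exact ⟨gsq j, (hmemset _).mpr (Or.inr (Or.inl rfl)), by rw [leadMon_gsq j]; exact h'⟩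
      · exact ⟨gsq k, (hmemset _).mpr (Or.inr (Or.inr (Or.inl rfl))),
          by rw [leadMon_gsq k]; exact h'⟩
      · exact ⟨gpr j k a b c, (hmemset _).mpr (Or.inr (Or.inr (Or.inr rfl))),
          by rw [hLpr]; exact h'⟩
    · intro g hg
      rcases (hmemset g).mp hg with rfl | rfl | rfl | rfl
      · rw [leadCoeff, hLgl]; exact coeff_gl_i hij hik hjk
      · rw [leadCoeff, leadMon_gsq j]; exact coeff_gsq j
      · rw [leadCoeff, leadMon_gsq k]; exact coeff_gsq k
      · rw [leadCoeff, hLpr]; exact coeff_gpr hjk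
    · intro g hg g' hg' hne d hd
      rcases (hmemset g').mp hg' with rfl | rfl | rfl | rfl
      · rcases (hmemset g).mp hg with rfl | rfl | rfl | rfl
        · exact absurd rfl hne
        · rw [hLgl]
          rcases supp_gsq hd with rfl | rfl
          · (apply not_le_at i
             simp only [Finsupp.single_apply, Finsupp.add_apply, Finsupp.coe_zero,
               Pi.zero_apply, eq_self_iff_true, if_true, if_pos rfl, if_neg hij, if_neg hik,
               if_neg hjk, if_neg (Ne.symm hij), if_neg (Ne.symm hik), if_neg (Ne.symm hjk)]
             omega)
          · (apply not_le_at i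
             simp only [Finsupp.single_apply, Finsupp.add_apply, Finsupp.coe_zero,
               Pi.zero_apply, eq_self_iff_true, if_true, if_pos rfl, if_neg hij, if_neg hik,
               if_neg hjk, if_neg (Ne.symm hij), if_neg (Ne.symm hik), if_neg (Ne.symm hjk)]
             omega)
        · rw [hLgl]
          rcases supp_gsq hd with rfl | rfl
          · (apply not_le_at i
             simp only [Finsupp.single_apply, Finsupp.add_apply, Finsupp.coe_zero,
               Pi.zero_apply, eq_self_iff_true, if_true, if_pos rfl, if_neg hij, if_neg hik,
               if_neg hjk, if_neg (Ne.symm hij), if_neg (Ne.symm hik), if_neg (Ne.symm hjk)]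
             omega)
          · (apply not_le_at i
             simp only [Finsupp.single_apply, Finsupp.add_apply, Finsupp.coe_zero,
               Pi.zero_apply, eq_self_iff_true, if_true, if_pos rfl, if_neg hij, if_neg hik,
               if_neg hjk, if_neg (Ne.symm hij), if_neg (Ne.symm hik), if_neg (Ne.symm hjk)]
             omega)
        · rw [hLgl]
          rcases supp_gpr hd with rfl | rfl | rfl | rfl
          · (apply not_le_at i
             simp only [Finsupp.single_apply, Finsupp.add_apply, Finsupp.coe_zero,
               Pi.zero_apply, eq_self_iff_true, if_true, if_pos rfl, if_neg hij, if_neg hik,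
               if_neg hjk, if_neg (Ne.symm hij), if_neg (Ne.symm hik), if_neg (Ne.symm hjk)]
             omega)
          · (apply not_le_at i
             simp only [Finsupp.single_apply, Finsupp.add_apply, Finsupp.coe_zero,
               Pi.zero_apply, eq_self_iff_true, if_true, if_pos rfl, if_neg hij, if_neg hik,
               if_neg hjk, if_neg (Ne.symm hij), if_neg (Ne.symm hik), if_neg (Ne.symm hjk)]
             omega)
          · (apply not_le_at i
             simp only [Finsupp.single_apply, Finsupp.add_apply, Finsupp.coe_zero,
               Pi.zero_apply, eq_self_iff_true, if_true, if_pos rfl, if_neg hij, if_neg hik,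
               if_neg hjk, if_neg (Ne.symm hij), if_neg (Ne.symm hik), if_neg (Ne.symm hjk)]
             omega)
          · (apply not_le_at i
             simp only [Finsupp.single_apply, Finsupp.add_apply, Finsupp.coe_zero,
               Pi.zero_apply, eq_self_iff_true, if_true, if_pos rfl, if_neg hij, if_neg hik,
               if_neg hjk, if_neg (Ne.symm hij), if_neg (Ne.symm hik), if_neg (Ne.symm hjk)]
             omega)
      · rcases (hmemset g).mp hg with rfl | rfl | rfl | rfl
        · rw [leadMon_gsq j]
          rcases supp_gl hd with rfl | rfl | rfl | rfl
          · (apply not_le_at j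
             simp only [Finsupp.single_apply, Finsupp.add_apply, Finsupp.coe_zero,
               Pi.zero_apply, eq_self_iff_true, if_true, if_pos rfl, if_neg hij, if_neg hik,
               if_neg hjk, if_neg (Ne.symm hij), if_neg (Ne.symm hik), if_neg (Ne.symm hjk)]
             omega)
          · (apply not_le_at j
             simp only [Finsupp.single_apply, Finsupp.add_apply, Finsupp.coe_zero,
               Pi.zero_apply, eq_self_iff_true, if_true, if_pos rfl, if_neg hij, if_neg hik,
               if_neg hjk, if_neg (Ne.symm hij), if_neg (Ne.symm hik), if_neg (Ne.symm hjk)]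
             omega)
          · (apply not_le_at j
             simp only [Finsupp.single_apply, Finsupp.add_apply, Finsupp.coe_zero,
               Pi.zero_apply, eq_self_iff_true, if_true, if_pos rfl, if_neg hij, if_neg hik,
               if_neg hjk, if_neg (Ne.symm hij), if_neg (Ne.symm hik), if_neg (Ne.symm hjk)]
             omega)
          · (apply not_le_at j
             simp only [Finsupp.single_apply, Finsupp.add_apply, Finsupp.coe_zero,
               Pi.zero_apply, eq_self_iff_true, if_true, if_pos rfl, if_neg hij, if_neg hik,
               if_neg hjk, if_neg (Ne.symm hij), if_neg (Ne.symm hik), if_neg (Ne.symm hjk)]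
             omega)
        · exact absurd rfl hne
        · rw [leadMon_gsq j]
          rcases supp_gsq hd with rfl | rfl
          · (apply not_le_at j
             simp only [Finsupp.single_apply, Finsupp.add_apply, Finsupp.coe_zero,
               Pi.zero_apply, eq_self_iff_true, if_true, if_pos rfl, if_neg hij, if_neg hik,
               if_neg hjk, if_neg (Ne.symm hij), if_neg (Ne.symm hik), if_neg (Ne.symm hjk)]
             omega)
          · (apply not_le_at j
             simp only [Finsupp.single_apply, Finsupp.add_apply, Finsupp.coe_zero,
               Pi.zero_apply, eq_self_iff_true, if_true, if_pos rfl, if_neg hij, if_neg hik,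
               if_neg hjk, if_neg (Ne.symm hij), if_neg (Ne.symm hik), if_neg (Ne.symm hjk)]
             omega)
        · rw [leadMon_gsq j]
          rcases supp_gpr hd with rfl | rfl | rfl | rfl
          · (apply not_le_at j
             simp only [Finsupp.single_apply, Finsupp.add_apply, Finsupp.coe_zero,
               Pi.zero_apply, eq_self_iff_true, if_true, if_pos rfl, if_neg hij, if_neg hik,
               if_neg hjk, if_neg (Ne.symm hij), if_neg (Ne.symm hik), if_neg (Ne.symm hjk)]
             omega)
          · (apply not_le_at j
             simp only [Finsupp.single_apply, Finsupp.add_apply, Finsupp.coe_zero,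
               Pi.zero_apply, eq_self_iff_true, if_true, if_pos rfl, if_neg hij, if_neg hik,
               if_neg hjk, if_neg (Ne.symm hij), if_neg (Ne.symm hik), if_neg (Ne.symm hjk)]
             omega)
          · (apply not_le_at j
             simp only [Finsupp.single_apply, Finsupp.add_apply, Finsupp.coe_zero,
               Pi.zero_apply, eq_self_iff_true, if_true, if_pos rfl, if_neg hij, if_neg hik,
               if_neg hjk, if_neg (Ne.symm hij), if_neg (Ne.symm hik), if_neg (Ne.symm hjk)]
             omega)
          · (apply not_le_at j
             simp only [Finsupp.single_apply, Finsupp.add_apply, Finsupp.coe_zero,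
               Pi.zero_apply, eq_self_iff_true, if_true, if_pos rfl, if_neg hij, if_neg hik,
               if_neg hjk, if_neg (Ne.symm hij), if_neg (Ne.symm hik), if_neg (Ne.symm hjk)]
             omega)
      · rcases (hmemset g).mp hg with rfl | rfl | rfl | rfl
        · rw [leadMon_gsq k]
          rcases supp_gl hd with rfl | rfl | rfl | rfl
          · (apply not_le_at k
             simp only [Finsupp.single_apply, Finsupp.add_apply, Finsupp.coe_zero,
               Pi.zero_apply, eq_self_iff_true, if_true, if_pos rfl, if_neg hij, if_neg hik,
               if_neg hjk, if_neg (Ne.symm hij), if_neg (Ne.symm hik), if_neg (Ne.symm hjk)]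
             omega)
          · (apply not_le_at k
             simp only [Finsupp.single_apply, Finsupp.add_apply, Finsupp.coe_zero,
               Pi.zero_apply, eq_self_iff_true, if_true, if_pos rfl, if_neg hij, if_neg hik,
               if_neg hjk, if_neg (Ne.symm hij), if_neg (Ne.symm hik), if_neg (Ne.symm hjk)]
             omega)
          · (apply not_le_at k
             simp only [Finsupp.single_apply, Finsupp.add_apply, Finsupp.coe_zero,
               Pi.zero_apply, eq_self_iff_true, if_true, if_pos rfl, if_neg hij, if_neg hik,
               if_neg hjk, if_neg (Ne.symm hij), if_neg (Ne.symm hik), if_neg (Ne.symm hjk)]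
             omega)
          · (apply not_le_at k
             simp only [Finsupp.single_apply, Finsupp.add_apply, Finsupp.coe_zero,
               Pi.zero_apply, eq_self_iff_true, if_true, if_pos rfl, if_neg hij, if_neg hik,
               if_neg hjk, if_neg (Ne.symm hij), if_neg (Ne.symm hik), if_neg (Ne.symm hjk)]
             omega)
        · rw [leadMon_gsq k]
          rcases supp_gsq hd with rfl | rfl
          · (apply not_le_at k
             simp only [Finsupp.single_apply, Finsupp.add_apply, Finsupp.coe_zero,
               Pi.zero_apply, eq_self_iff_true, if_true, if_pos rfl, if_neg hij, if_neg hik,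
               if_neg hjk, if_neg (Ne.symm hij), if_neg (Ne.symm hik), if_neg (Ne.symm hjk)]
             omega)
          · (apply not_le_at k
             simp only [Finsupp.single_apply, Finsupp.add_apply, Finsupp.coe_zero,
               Pi.zero_apply, eq_self_iff_true, if_true, if_pos rfl, if_neg hij, if_neg hik,
               if_neg hjk, if_neg (Ne.symm hij), if_neg (Ne.symm hik), if_neg (Ne.symm hjk)]
             omega)
        · exact absurd rfl hne
        · rw [leadMon_gsq k]
          rcases supp_gpr hd with rfl | rfl | rfl | rfl
          · (apply not_le_at k
             simp only [Finsupp.single_apply, Finsupp.add_apply, Finsupp.coe_zero,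
               Pi.zero_apply, eq_self_iff_true, if_true, if_pos rfl, if_neg hij, if_neg hik,
               if_neg hjk, if_neg (Ne.symm hij), if_neg (Ne.symm hik), if_neg (Ne.symm hjk)]
             omega)
          · (apply not_le_at k
             simp only [Finsupp.single_apply, Finsupp.add_apply, Finsupp.coe_zero,
               Pi.zero_apply, eq_self_iff_true, if_true, if_pos rfl, if_neg hij, if_neg hik,
               if_neg hjk, if_neg (Ne.symm hij), if_neg (Ne.symm hik), if_neg (Ne.symm hjk)]
             omega)
          · (apply not_le_at k
             simp only [Finsupp.single_apply, Finsupp.add_apply, Finsupp.coe_zero,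
               Pi.zero_apply, eq_self_iff_true, if_true, if_pos rfl, if_neg hij, if_neg hik,
               if_neg hjk, if_neg (Ne.symm hij), if_neg (Ne.symm hik), if_neg (Ne.symm hjk)]
             omega)
          · (apply not_le_at k
             simp only [Finsupp.single_apply, Finsupp.add_apply, Finsupp.coe_zero,
               Pi.zero_apply, eq_self_iff_true, if_true, if_pos rfl, if_neg hij, if_neg hik,
               if_neg hjk, if_neg (Ne.symm hij), if_neg (Ne.symm hik), if_neg (Ne.symm hjk)]
             omega)
      · rcases (hmemset g).mp hg with rfl | rfl | rfl | rfl
        · rw [hLpr]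
          rcases supp_gl hd with rfl | rfl | rfl | rfl
          · (apply not_le_at j
             simp only [Finsupp.single_apply, Finsupp.add_apply, Finsupp.coe_zero,
               Pi.zero_apply, eq_self_iff_true, if_true, if_pos rfl, if_neg hij, if_neg hik,
               if_neg hjk, if_neg (Ne.symm hij), if_neg (Ne.symm hik), if_neg (Ne.symm hjk)]
             omega)
          · (apply not_le_at k
             simp only [Finsupp.single_apply, Finsupp.add_apply, Finsupp.coe_zero,
               Pi.zero_apply, eq_self_iff_true, if_true, if_pos rfl, if_neg hij, if_neg hik,
               if_neg hjk, if_neg (Ne.symm hij), if_neg (Ne.symm hik), if_neg (Ne.symm hjk)]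
             omega)
          · (apply not_le_at j
             simp only [Finsupp.single_apply, Finsupp.add_apply, Finsupp.coe_zero,
               Pi.zero_apply, eq_self_iff_true, if_true, if_pos rfl, if_neg hij, if_neg hik,
               if_neg hjk, if_neg (Ne.symm hij), if_neg (Ne.symm hik), if_neg (Ne.symm hjk)]
             omega)
          · (apply not_le_at j
             simp only [Finsupp.single_apply, Finsupp.add_apply, Finsupp.coe_zero,
               Pi.zero_apply, eq_self_iff_true, if_true, if_pos rfl, if_neg hij, if_neg hik,
               if_neg hjk, if_neg (Ne.symm hij), if_neg (Ne.symm hik), if_neg (Ne.symm hjk)]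
             omega)
        · rw [hLpr]
          rcases supp_gsq hd with rfl | rfl
          · (apply not_le_at k
             simp only [Finsupp.single_apply, Finsupp.add_apply, Finsupp.coe_zero,
               Pi.zero_apply, eq_self_iff_true, if_true, if_pos rfl, if_neg hij, if_neg hik,
               if_neg hjk, if_neg (Ne.symm hij), if_neg (Ne.symm hik), if_neg (Ne.symm hjk)]
             omega)
          · (apply not_le_at k
             simp only [Finsupp.single_apply, Finsupp.add_apply, Finsupp.coe_zero,
               Pi.zero_apply, eq_self_iff_true, if_true, if_pos rfl, if_neg hij, if_neg hik,
               if_neg hjk, if_neg (Ne.symm hij), if_neg (Ne.symm hik), if_neg (Ne.symm hjk)]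
             omega)
        · rw [hLpr]
          rcases supp_gsq hd with rfl | rfl
          · (apply not_le_at j
             simp only [Finsupp.single_apply, Finsupp.add_apply, Finsupp.coe_zero,
               Pi.zero_apply, eq_self_iff_true, if_true, if_pos rfl, if_neg hij, if_neg hik,
               if_neg hjk, if_neg (Ne.symm hij), if_neg (Ne.symm hik), if_neg (Ne.symm hjk)]
             omega)
          · (apply not_le_at j
             simp only [Finsupp.single_apply, Finsupp.add_apply, Finsupp.coe_zero,
               Pi.zero_apply, eq_self_iff_true, if_true, if_pos rfl, if_neg hij, if_neg hik,
               if_neg hjk, if_neg (Ne.symm hij), if_neg (Ne.symm hik), if_neg (Ne.symm hjk)]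
             omega)
        · exact absurd rfl hne




/-- lexicographic order transported along a permutation of the variables -/
noncomputable def permOrder (e : Fin 3 ≃ Fin 3) : MonomialOrder (Fin 3) where
  syn := Lex (Fin 3 →₀ ℕ)
  toSyn := (Finsupp.domCongr e).trans { toEquiv := toLex, map_add' := toLex_add }
  toSyn_monotone := by
    intro u v huv
    apply Finsupp.toLex_monotone
    intro x
    simp only [Finsupp.domCongr_apply, Finsupp.equivMapDomain_apply]
    exact huv _

lemma toLex_single_lt {u w : Fin 3} (h : w < u) :
    toLex (single u (1 : ℕ)) < toLex (single w 1) := by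
  rw [Finsupp.Lex.lt_iff]
  refine ⟨w, fun v hv => ?_, ?_⟩
  · simp [Finsupp.single_apply, (hv.trans h).ne', hv.ne',
      if_neg (hv.trans h).ne', if_neg hv.ne']
  · simp [Finsupp.single_apply, if_neg h.ne']

lemma permOrder_single_lt (e : Fin 3 ≃ Fin 3) {u w : Fin 3} (h : e u < e w) :
    (permOrder e).toSyn (single w 1) < (permOrder e).toSyn (single u 1) := by
  show toLex (Finsupp.equivMapDomain e (single w 1)) <
    toLex (Finsupp.equivMapDomain e (single u 1))
  rw [Finsupp.equivMapDomain_single, Finsupp.equivMapDomain_single]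
  exact toLex_single_lt h

lemma trichotomy (m : MonomialOrder (Fin 3)) :
    (m.toSyn (single 1 1) < m.toSyn (single 0 1) ∧
      m.toSyn (single 2 1) < m.toSyn (single 0 1)) ∨
    (m.toSyn (single 0 1) < m.toSyn (single 1 1) ∧
      m.toSyn (single 2 1) < m.toSyn (single 1 1)) ∨
    (m.toSyn (single 0 1) < m.toSyn (single 2 1) ∧
      m.toSyn (single 1 1) < m.toSyn (single 2 1)) := by
  have hne : ∀ u w : Fin 3, u ≠ w → m.toSyn (single u 1) ≠ m.toSyn (single w 1) :=
    fun u w h he => absurd (m.toSyn.injective he) (sne1 h one_ne_zero 1)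
  rcases lt_trichotomy (m.toSyn (single 0 1)) (m.toSyn (single 1 1)) with h01 | h01 | h01
  · rcases lt_trichotomy (m.toSyn (single 1 1)) (m.toSyn (single 2 1)) with h12 | h12 | h12
    · exact Or.inr (Or.inr ⟨h01.trans h12, h12⟩)
    · exact absurd h12 (hne 1 2 (by decide))
    · exact Or.inr (Or.inl ⟨h01, h12⟩)
  · exact absurd h01 (hne 0 1 (by decide))
  · rcases lt_trichotomy (m.toSyn (single 0 1)) (m.toSyn (single 2 1)) with h02 | h02 | h02
    · exact Or.inr (Or.inr ⟨h02, h01.trans h02⟩)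
    · exact absurd h02 (hne 0 2 (by decide))
    · exact Or.inl ⟨h01, h02⟩

-- per-case data
lemma hq0 : gpr 1 2 0 1 0 ∈ Ivt := by
  rw [mem_Ivt_iff]
  refine ⟨?_, ?_, ?_⟩ <;> rw [eval_gpr] <;> decide

lemma hq1 : gpr 0 2 0 1 0 ∈ Ivt := by
  rw [mem_Ivt_iff]
  refine ⟨?_, ?_, ?_⟩ <;> rw [eval_gpr] <;> decide

lemma hq2 : gpr 0 1 1 1 1 ∈ Ivt := by
  rw [mem_Ivt_iff]
  refine ⟨?_, ?_, ?_⟩ <;> rw [eval_gpr] <;> decide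

lemma huniq_gen (j k : Fin 3)
    (h : ∀ A B C : ZMod 2,
      A * ![1,0,0] j + B * ![1,0,0] k + C = 0 →
      A * ![0,1,0] j + B * ![0,1,0] k + C = 0 →
      A * ![1,1,1] j + B * ![1,1,1] k + C = 0 →
      A = 0 ∧ B = 0 ∧ C = 0) :
    ∀ A B C : ZMod 2, (∀ s ∈ pts, A * s j + B * s k + C = 0) →
      A = 0 ∧ B = 0 ∧ C = 0 := by
  intro A B C hall
  exact h A B C (hall _ (by simp [pts])) (hall _ (by simp [pts])) (hall _ (by simp [pts]))

/-- the case-specific instantiations of `master` -/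
lemma master0 {m : MonomialOrder (Fin 3)}
    (h1 : m.toSyn (single 1 1) < m.toSyn (single 0 1))
    (h2 : m.toSyn (single 2 1) < m.toSyn (single 0 1))
    (G : Finset (MvPolynomial (Fin 3) (ZMod 2))) :
    IsReducedGroebnerBasis m Ivt G ↔ G = GBset 0 1 2 0 1 0 :=
  master (by decide) (by decide) (by decide) (by decide) h1 h2 hq0
    ![1,0,0] ![0,1,0] (by simp [pts]) (by simp [pts]) (by decide) (by decide)
    ![0,1,0] ![1,1,1] (by simp [pts]) (by simp [pts]) (by decide) (by decide)
    (huniq_gen 1 2 (by decide)) G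

lemma master1 {m : MonomialOrder (Fin 3)}
    (h1 : m.toSyn (single 0 1) < m.toSyn (single 1 1))
    (h2 : m.toSyn (single 2 1) < m.toSyn (single 1 1))
    (G : Finset (MvPolynomial (Fin 3) (ZMod 2))) :
    IsReducedGroebnerBasis m Ivt G ↔ G = GBset 1 0 2 0 1 0 :=
  master (by decide) (by decide) (by decide) (by decide) h1 h2 hq1
    ![1,0,0] ![0,1,0] (by simp [pts]) (by simp [pts]) (by decide) (by decide)
    ![1,0,0] ![1,1,1] (by simp [pts]) (by simp [pts]) (by decide) (by decide)
    (huniq_gen 0 2 (by decide)) G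

lemma master2 {m : MonomialOrder (Fin 3)}
    (h1 : m.toSyn (single 0 1) < m.toSyn (single 2 1))
    (h2 : m.toSyn (single 1 1) < m.toSyn (single 2 1))
    (G : Finset (MvPolynomial (Fin 3) (ZMod 2))) :
    IsReducedGroebnerBasis m Ivt G ↔ G = GBset 2 0 1 1 1 1 :=
  master (by decide) (by decide) (by decide) (by decide) h1 h2 hq2
    ![0,1,0] ![1,1,1] (by simp [pts]) (by simp [pts]) (by decide) (by decide)
    ![1,0,0] ![1,1,1] (by simp [pts]) (by simp [pts]) (by decide) (by decide)
    (huniq_gen 0 1 (by decide)) G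

lemma set_eq : {G : Finset (MvPolynomial (Fin 3) (ZMod 2)) |
      ∃ m : MonomialOrder.{0,0} (Fin 3), IsReducedGroebnerBasis m Ivt G} =
    {GBset 0 1 2 0 1 0, GBset 1 0 2 0 1 0, GBset 2 0 1 1 1 1} := by
  ext G
  constructor
  · rintro ⟨m, hm⟩
    rcases trichotomy m with ⟨h1, h2⟩ | ⟨h1, h2⟩ | ⟨h1, h2⟩
    · exact Or.inl ((master0 h1 h2 G).mp hm)
    · exact Or.inr (Or.inl ((master1 h1 h2 G).mp hm))
    · exact Or.inr (Or.inr ((master2 h1 h2 G).mp hm))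
  · intro hG
    rcases hG with rfl | rfl | rfl
    · exact ⟨permOrder (Equiv.refl _),
        (master0 (permOrder_single_lt _ (by decide)) (permOrder_single_lt _ (by decide)) _).mpr rfl⟩
    · exact ⟨permOrder (Equiv.swap 0 1),
        (master1 (permOrder_single_lt _ (by decide)) (permOrder_single_lt _ (by decide)) _).mpr rfl⟩
    · exact ⟨permOrder (Equiv.swap 0 2),
        (master2 (permOrder_single_lt _ (by decide)) (permOrder_single_lt _ (by decide)) _).mpr rfl⟩

end GB3
namespace GB3
open MvPolynomial Finsupp

lemma single_one_ne_single_two (u v : Fin 3) : single u (1:ℕ) ≠ single v 2 := by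
  intro h
  have hv := DFunLike.congr_fun h v
  by_cases huv : u = v <;> simp [Finsupp.single_apply, huv] at hv

lemma zero_ne_single_two (v : Fin 3) : (0 : Fin 3 →₀ ℕ) ≠ single v 2 := by
  intro h
  have hv := DFunLike.congr_fun h v
  simp [Finsupp.single_apply] at hv

lemma sum_ne_single_two (j k v : Fin 3) (hjk : j ≠ k) :
    single j 1 + single k 1 ≠ single v (2:ℕ) := by
  intro h
  have hv := DFunLike.congr_fun h v
  by_cases hj : j = v <;> by_cases hk : k = v <;>
    simp [Finsupp.add_apply, Finsupp.single_apply, hj, hk] at hv hjk ⊢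

lemma coeff_gl_sq (i j k v : Fin 3) : (gl i j k).coeff (single v 2) = 0 := by
  rw [gl]
  simp only [coeff_add, coeff_monomial, if_neg (single_one_ne_single_two i v),
    if_neg (single_one_ne_single_two j v), if_neg (single_one_ne_single_two k v),
    if_neg (zero_ne_single_two v)]
  norm_num

lemma coeff_gpr_sq (j k v : Fin 3) (hjk : j ≠ k) (a b c : ZMod 2) :
    (gpr j k a b c).coeff (single v 2) = 0 := by
  rw [gpr]
  simp only [coeff_add, coeff_monomial, if_neg (sum_ne_single_two j k v hjk),
    if_neg (single_one_ne_single_two j v), if_neg (single_one_ne_single_two k v),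
    if_neg (zero_ne_single_two v)]
  norm_num

lemma coeff_gsq_sq (w v : Fin 3) (h : w ≠ v) : (gsq w).coeff (single v 2) = 0 := by
  rw [gsq]
  simp only [coeff_add, coeff_monomial,
    if_neg (sne1 h (two_ne_zero) 2), if_neg (single_one_ne_single_two w v)]
  norm_num

lemma gsq_notmem (i j k v : Fin 3) (hvj : v ≠ j) (hvk : v ≠ k) (hjk : j ≠ k)
    (a b c : ZMod 2) : gsq v ∉ GBset i j k a b c := by
  intro hmem
  have h0 : (gsq v).coeff (single v 2) = 1 := coeff_gsq v
  have hcases : gsq v = gl i j k ∨ gsq v = gsq j ∨ gsq v = gsq k ∨ gsq v = gpr j k a b c := by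
    simpa [GBset] using hmem
  rcases hcases with h | h | h | h
  · rw [h, coeff_gl_sq] at h0; exact absurd h0 (by decide)
  · rw [h, coeff_gsq_sq j v (Ne.symm hvj)] at h0; exact absurd h0 (by decide)
  · rw [h, coeff_gsq_sq k v (Ne.symm hvk)] at h0; exact absurd h0 (by decide)
  · rw [h, coeff_gpr_sq j k v hjk] at h0; exact absurd h0 (by decide)

lemma gsq_mem_GBset_j (i j k : Fin 3) (a b c : ZMod 2) : gsq j ∈ GBset i j k a b c := by
  simp [GBset]

lemma gsq_mem_GBset_k (i j k : Fin 3) (a b c : ZMod 2) : gsq k ∈ GBset i j k a b c := by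
  simp [GBset]

lemma neAB : GBset 0 1 2 0 1 0 ≠ GBset 1 0 2 0 1 0 := by
  intro h
  exact gsq_notmem 1 0 2 1 (by decide) (by decide) (by decide) 0 1 0
    (h ▸ gsq_mem_GBset_j 0 1 2 0 1 0)

lemma neAC : GBset 0 1 2 0 1 0 ≠ GBset 2 0 1 1 1 1 := by
  intro h
  exact gsq_notmem 2 0 1 2 (by decide) (by decide) (by decide) 1 1 1
    (h ▸ gsq_mem_GBset_k 0 1 2 0 1 0)

lemma neBC : GBset 1 0 2 0 1 0 ≠ GBset 2 0 1 1 1 1 := by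
  intro h
  exact gsq_notmem 2 0 1 2 (by decide) (by decide) (by decide) 1 1 1
    (h ▸ gsq_mem_GBset_k 1 0 2 0 1 0)

end GB3

/-- The vanishing ideal of `{(1,0,0), (0,1,0), (1,1,1)} ⊆ (ZMod 2)³` has exactly three
distinct reduced Gröbner bases. -/
theorem three_reduced_GBs_interior_triangle_Z2 :
    numReducedGB
      (vanishingIdeal (ZMod 2) ({![1, 0, 0], ![0, 1, 0], ![1, 1, 1]} : Set (Fin 3 → ZMod 2))) = 3 := by
  show numReducedGB GB3.Ivt = 3
  rw [numReducedGB, GB3.set_eq]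
  exact Set.ncard_eq_three.mpr
    ⟨_, _, _, GB3.neAB, GB3.neAC, GB3.neBC, rfl⟩
end
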